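/- arXiv:1507.05338 — 8 statements merged into one kernel-verified Lean document; each statement's English description precedes it below -/
import Mathlib

section
/- Every graph on n vertices with more than (k-2)n/2 edges contains a path on k vertices. -/
/-!
Strong induction on a vertex set `s` with `(k - 2)|s| < 2e(s)`, where `2e(s)` is counted as
`#(G.interedges s s)`, the number of ordered pairs of adjacent vertices of `s`.
If some vertex has at most `(k - 2)/2` neighbours in `s`, deleting it keeps the inequality.
Otherwise take a longest path `P` inside `s`. If it has fewer than `k` vertices, the degrees of its
ends add up to at least `|P|`, so (Pósa) some consecutive pair `x, y` of `P` has `y` adjacent to the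
first and `x` adjacent to the last vertex, closing `P` into a cycle. By maximality of `P`, no vertex
of `s` outside `P` is adjacent to this cycle, and since `2e(P) ≤ |P|(|P| - 1) ≤ (k - 2)|P|`, the
inequality passes to `s \ P`.
-/

open Finset

namespace List

theorem exists_eq_append_cons_cons_of_mem_zip {α : Type*} :
    ∀ {l : List α} {x y : α}, (x, y) ∈ l.dropLast.zip l.tail →
      ∃ l₁ l₂, l = l₁ ++ x :: y :: l₂
  | [], _, _, h => by simp at h
  | [_], _, _, h => by simp at h
  | a :: b :: l, x, y, h => by
    rw [dropLast_cons_cons, tail_cons, zip_cons_cons, mem_cons] at h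
    rcases h with h | h
    · obtain ⟨rfl, rfl⟩ := Prod.mk.inj h
      exact ⟨[], l, rfl⟩
    · obtain ⟨l₁, l₂, e⟩ := exists_eq_append_cons_cons_of_mem_zip (l := b :: l) h
      exact ⟨a :: l₁, l₂, by rw [e]; rfl⟩

end List

theorem Cycle.Chain.exists_cons_perm {α : Type*} {r : α → α → Prop} {l : List α}
    (h : Cycle.Chain r (l : Cycle α)) {y : α} (hy : y ∈ l) :
    ∃ l', (y :: l').IsChain r ∧ (y :: l').Perm l := by
  obtain ⟨s, t, rfl⟩ := List.append_of_mem hy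
  have hrot : ((s ++ y :: t : List α) : Cycle α) = (y :: (t ++ s) : List α) :=
    Cycle.coe_eq_coe.mpr List.isRotated_append
  rw [hrot, Cycle.chain_coe_cons] at h
  exact ⟨t ++ s, h.infix ⟨[], [y], by simp⟩,
    (List.perm_append_comm.cons y).trans List.perm_middle.symm⟩

namespace SimpleGraph

variable {V : Type*} {G : SimpleGraph V}

theorem cycleChain_append_reverse {l₁ l₂ : List V} (h : (l₁ ++ l₂).IsChain G.Adj)
    (h₁ : l₁ ≠ []) (h₂ : l₂ ≠ []) (hhead : G.Adj (l₁.head h₁) (l₂.head h₂))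
    (hlast : G.Adj (l₁.getLast h₁) (l₂.getLast h₂)) :
    Cycle.Chain G.Adj (l₁ ++ l₂.reverse : List V) := by
  rw [Cycle.chain_ne_nil _ (by simp [h₁]), List.getLast_append_of_ne_nil _ (by simpa using h₂),
    List.getLast_reverse, ← List.cons_append]
  refine (h.left_of_append.cons_of_ne_nil h₁ hhead.symm).append ?_ ?_
  · exact List.isChain_reverse.mpr (h.right_of_append.imp fun _ _ hab => hab.symm)
  · simp [List.getLast?_cons, List.getLast?_eq_some_getLast h₁,
      List.getLast?_eq_some_getLast h₂, hlast]

theorem exists_perm_cycleChain_of_length_le {L : List V} (hL : L.IsChain G.Adj)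
    (hne : L ≠ []) {A B : Finset V} (hA : ∀ y ∈ A, y ∈ L ∧ G.Adj (L.head hne) y)
    (hB : ∀ x ∈ B, x ∈ L ∧ G.Adj (L.getLast hne) x) (hcard : L.length ≤ #A + #B) :
    ∃ C : List V, C.Perm L ∧ Cycle.Chain G.Adj (C : Cycle V) := by
  classical
  set P := (L.dropLast.zip L.tail).toFinset
  set A' := P.filter fun e => G.Adj (L.head hne) e.2
  set B' := P.filter fun e => G.Adj e.1 (L.getLast hne)
  have hP : #P < L.length := by
    refine (List.toFinset_card_le _).trans_lt ?_
    simp only [List.length_zip, List.length_dropLast, List.length_tail, min_self]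
    have := List.length_pos_iff.mpr hne
    omega
  have hA' : #A ≤ #A' := by
    refine (card_le_card fun y hy => ?_).trans (card_image_le (f := Prod.snd))
    obtain ⟨hyL, hadj⟩ := hA y hy
    have hy : y ∈ (L.dropLast.zip L.tail).map Prod.snd := by
      rw [List.map_snd_zip (by simp)]
      rw [← List.cons_head_tail hne, List.mem_cons] at hyL
      exact hyL.resolve_left (G.ne_of_adj hadj).symm
    obtain ⟨e, he, rfl⟩ := List.mem_map.mp hy
    exact mem_image_of_mem _ (mem_filter.mpr ⟨List.mem_toFinset.mpr he, hadj⟩)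
  have hB' : #B ≤ #B' := by
    refine (card_le_card fun x hx => ?_).trans (card_image_le (f := Prod.fst))
    obtain ⟨hxL, hadj⟩ := hB x hx
    have hx : x ∈ (L.dropLast.zip L.tail).map Prod.fst := by
      rw [List.map_fst_zip (by simp)]
      rw [← List.dropLast_append_getLast hne, List.mem_append, List.mem_singleton] at hxL
      exact hxL.resolve_right (G.ne_of_adj hadj).symm
    obtain ⟨e, he, rfl⟩ := List.mem_map.mp hx
    exact mem_image_of_mem _ (mem_filter.mpr ⟨List.mem_toFinset.mpr he, hadj.symm⟩)
  obtain ⟨⟨x, y⟩, hxy⟩ : (A' ∩ B').Nonempty := by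
    have hunion : #(A' ∪ B') ≤ #P :=
      card_le_card (union_subset (filter_subset _ _) (filter_subset _ _))
    have := card_union_add_card_inter A' B'
    rw [← card_pos]
    omega
  simp only [A', B', P, mem_inter, mem_filter, List.mem_toFinset] at hxy
  obtain ⟨⟨hmem, hya⟩, -, hxb⟩ := hxy
  obtain ⟨l₁, l₂, rfl⟩ := List.exists_eq_append_cons_cons_of_mem_zip hmem
  refine ⟨l₁ ++ [x] ++ (y :: l₂).reverse, ?_, cycleChain_append_reverse (by simpa using hL)
    (by simp) (by simp) ?_ ?_⟩
  · simpa using (((y :: l₂).reverse_perm).cons x).append_left l₁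
  · convert hya using 1 <;> cases l₁ <;> rfl
  · convert hxb using 1 <;> simp

section Interedges

variable [DecidableRel G.Adj]

theorem card_interedges_union_left [DecidableEq V] {s₁ s₂ : Finset V} (h : Disjoint s₁ s₂)
    (t : Finset V) :
    #(G.interedges (s₁ ∪ s₂) t) = #(G.interedges s₁ t) + #(G.interedges s₂ t) := by
  rw [← card_union_of_disjoint (G.interedges_disjoint_left h t)]
  congr 1
  ext ⟨a, b⟩
  simp only [mem_union, mk_mem_interedges_iff]
  tauto

theorem card_interedges_union_right [DecidableEq V] (s : Finset V) {t₁ t₂ : Finset V}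
    (h : Disjoint t₁ t₂) :
    #(G.interedges s (t₁ ∪ t₂)) = #(G.interedges s t₁) + #(G.interedges s t₂) := by
  rw [← card_union_of_disjoint (G.interedges_disjoint_right s h)]
  congr 1
  ext ⟨a, b⟩
  simp only [mem_union, mk_mem_interedges_iff]
  tauto

theorem card_interedges_union_self [DecidableEq V] {s t : Finset V} (h : Disjoint s t) :
    #(G.interedges (s ∪ t) (s ∪ t)) =
      #(G.interedges s s) + #(G.interedges t t) + 2 * #(G.interedges s t) := by
  have := G.symm
  rw [card_interedges_union_left h, card_interedges_union_right _ h,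
    card_interedges_union_right _ h, show #(G.interedges t s) = #(G.interedges s t) from
      Rel.card_interedges_comm t s]
  ring

theorem card_interedges_erase_self [DecidableEq V] {s : Finset V} {v : V} (hv : v ∈ s) :
    #(G.interedges s s) =
      #(G.interedges (s.erase v) (s.erase v)) + 2 * #{w ∈ s | G.Adj v w} := by
  have hsplit := G.card_interedges_union_self (disjoint_singleton_left.2 (s.notMem_erase v))
  rw [← insert_eq, insert_erase hv] at hsplit
  have hloop : G.interedges {v} {v} = ∅ := by
    ext ⟨a, b⟩
    simp only [mk_mem_interedges_iff, mem_singleton, notMem_empty, iff_false]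
    rintro ⟨rfl, rfl, h⟩
    exact h.ne rfl
  have hnbr : #(G.interedges {v} (s.erase v)) = #{w ∈ s | G.Adj v w} := by
    rw [interedges_def, singleton_product, filter_map, card_map, filter_erase,
      erase_eq_of_notMem (by simp)]
    rfl
  rw [hsplit, hloop, hnbr, card_empty]
  ring

theorem card_interedges_self_le [DecidableEq V] (s : Finset V) :
    #(G.interedges s s) ≤ #s * (#s - 1) := by
  rw [Nat.mul_sub_one, ← offDiag_card]
  refine card_le_card fun e he => ?_
  rw [mem_interedges_iff] at he
  exact mem_offDiag.mpr ⟨he.1, he.2.1, he.2.2.ne⟩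

theorem card_interedges_univ [Fintype V] :
    #(G.interedges univ univ) = 2 * #G.edgeFinset := by
  rw [← dart_card_eq_twice_card_edges, ← card_univ]
  symm
  refine card_nbij (fun d => d.toProd) (fun d _ => ?_)
    (fun d _ d' _ h => Dart.toProd_injective h) ?_
  · simp [mem_interedges_iff]
  · rintro ⟨a, b⟩ he
    exact ⟨⟨(a, b), (G.mem_interedges_iff.mp he).2.2⟩, by simp, rfl⟩

end Interedges

def IsPathListIn (G : SimpleGraph V) (s : Finset V) (L : List V) : Prop :=
  L.IsChain G.Adj ∧ L.Nodup ∧ ∀ x ∈ L, x ∈ s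

def IsLongestPathListIn (G : SimpleGraph V) (s : Finset V) (L : List V) : Prop :=
  G.IsPathListIn s L ∧ ∀ M, G.IsPathListIn s M → M.length ≤ L.length

theorem isPathListIn_singleton {s : Finset V} {v : V} (hv : v ∈ s) : G.IsPathListIn s [v] :=
  ⟨List.isChain_singleton v, List.nodup_singleton v, by simpa⟩

theorem exists_isLongestPathListIn {s : Finset V} (hs : s.Nonempty) :
    ∃ L, G.IsLongestPathListIn s L := by
  classical
  have hbdd : ∀ M, G.IsPathListIn s M → M.length ≤ #s := fun M hM => by
    rw [← List.toFinset_card_of_nodup hM.2.1]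
    exact card_le_card fun x hx => hM.2.2 x (List.mem_toFinset.mp hx)
  obtain ⟨v, hv⟩ := hs
  obtain ⟨L, hL, hlen⟩ :=
    Nat.findGreatest_spec (P := fun m => ∃ L, G.IsPathListIn s L ∧ L.length = m)
      (hbdd _ (isPathListIn_singleton hv)) ⟨_, isPathListIn_singleton hv, rfl⟩
  exact ⟨L, hL, fun M hM => hlen ▸ Nat.le_findGreatest (hbdd M hM) ⟨M, hM, rfl⟩⟩

namespace IsLongestPathListIn

variable {s : Finset V} {L : List V}

theorem ne_nil (hL : G.IsLongestPathListIn s L) (hs : s.Nonempty) : L ≠ [] := by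
  obtain ⟨v, hv⟩ := hs
  have := hL.2 [v] (isPathListIn_singleton hv)
  rintro rfl
  simp at this

theorem mem_of_adj_of_perm (hL : G.IsLongestPathListIn s L) {y : V} {M : List V}
    (hchain : (y :: M).IsChain G.Adj) (hperm : (y :: M).Perm L) {w : V} (hw : w ∈ s)
    (hadj : G.Adj y w) : w ∈ L := by
  obtain ⟨⟨-, hnodup, hsub⟩, hmax⟩ := hL
  by_contra hwL
  have hlong := hmax (w :: y :: M) ⟨List.isChain_cons_cons.mpr ⟨hadj.symm, hchain⟩,
    List.nodup_cons.mpr ⟨mt hperm.mem_iff.mp hwL, hperm.nodup_iff.mpr hnodup⟩,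
    List.forall_mem_cons.mpr ⟨hw, fun x hx => hsub x (hperm.mem_iff.mp hx)⟩⟩
  simp [← hperm.length_eq] at hlong

theorem mem_of_adj [DecidableRel G.Adj] (hL : G.IsLongestPathListIn s L) (hne : L ≠ [])
    (hdeg : L.length ≤ #{w ∈ s | G.Adj (L.head hne) w} + #{w ∈ s | G.Adj (L.getLast hne) w})
    {x w : V} (hx : x ∈ L) (hw : w ∈ s) (hadj : G.Adj x w) : w ∈ L := by
  have hchain := hL.1.1
  have hhead : ∀ w ∈ s, G.Adj (L.head hne) w → w ∈ L := fun w hw hadj =>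
    hL.mem_of_adj_of_perm (by rwa [List.cons_head_tail]) (by rw [List.cons_head_tail]) hw hadj
  have hlast : ∀ w ∈ s, G.Adj (L.getLast hne) w → w ∈ L := fun w hw hadj => by
    have hne' : L.reverse ≠ [] := by simpa
    refine hL.mem_of_adj_of_perm (y := L.reverse.head hne') (M := L.reverse.tail) ?_ ?_ hw
      (by simpa using hadj)
    · rw [List.cons_head_tail]
      exact List.isChain_reverse.mpr (hchain.imp fun _ _ h => h.symm)
    · rw [List.cons_head_tail]
      exact List.reverse_perm L
  obtain ⟨C, hCL, hC⟩ := exists_perm_cycleChain_of_length_le hchain hne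
    (fun y hy => by rw [mem_filter] at hy; exact ⟨hhead y hy.1 hy.2, hy.2⟩)
    (fun y hy => by rw [mem_filter] at hy; exact ⟨hlast y hy.1 hy.2, hy.2⟩) hdeg
  obtain ⟨C', hchain', hperm⟩ := hC.exists_cons_perm (hCL.mem_iff.mpr hx)
  exact hL.mem_of_adj_of_perm hchain' (hperm.trans hCL) hw hadj

end IsLongestPathListIn

section Density

variable [DecidableRel G.Adj] [DecidableEq V] {k : ℕ} {s : Finset V}

theorem lt_card_interedges_erase (hs : (k - 2) * #s < #(G.interedges s s)) {v : V} (hv : v ∈ s)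
    (hdeg : 2 * #{w ∈ s | G.Adj v w} + 2 ≤ k) :
    (k - 2) * #(s.erase v) < #(G.interedges (s.erase v) (s.erase v)) := by
  rw [card_interedges_erase_self hv, ← card_erase_add_one hv, Nat.mul_succ] at hs
  omega

theorem lt_card_interedges_sdiff (hs : (k - 2) * #s < #(G.interedges s s)) {t : Finset V}
    (hts : t ⊆ s) (hclosed : ∀ x ∈ t, ∀ w ∈ s, G.Adj x w → w ∈ t) (ht : #t < k) :
    (k - 2) * #(s \ t) < #(G.interedges (s \ t) (s \ t)) := by
  have hsplit := G.card_interedges_union_self (disjoint_sdiff (s := t) (t := s))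
  have hcross : G.interedges t (s \ t) = ∅ := by
    ext ⟨x, w⟩
    simp only [mk_mem_interedges_iff, mem_sdiff, notMem_empty, iff_false]
    exact fun ⟨hx, ⟨hw, hwt⟩, hadj⟩ => hwt (hclosed x hx w hw hadj)
  have hinside : #(G.interedges t t) ≤ (k - 2) * #t :=
    (card_interedges_self_le t).trans (by rw [mul_comm]; exact Nat.mul_le_mul_right _ (by omega))
  rw [union_sdiff_of_subset hts, hcross, card_empty] at hsplit
  rw [← card_sdiff_add_card_eq_card hts, mul_add] at hs
  omega

end Density

theorem exists_isChain_nodup_le_length [DecidableRel G.Adj] (k : ℕ) (s : Finset V)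
    (hs : (k - 2) * #s < #(G.interedges s s)) :
    ∃ L : List V, L.IsChain G.Adj ∧ L.Nodup ∧ k ≤ L.length := by
  classical
  induction s using Finset.strongInduction with
  | H s ih =>
  by_cases hlow : ∃ v ∈ s, 2 * #{w ∈ s | G.Adj v w} + 2 ≤ k
  · obtain ⟨v, hv, hdeg⟩ := hlow
    exact ih _ (erase_ssubset hv) (lt_card_interedges_erase hs hv hdeg)
  push Not at hlow
  have hsne : s.Nonempty := nonempty_of_ne_empty (by rintro rfl; simp at hs)
  obtain ⟨L, hL⟩ := exists_isLongestPathListIn (G := G) hsne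
  obtain ⟨hchain, hnodup, hsub⟩ := hL.1
  obtain hk | hk := le_or_gt k L.length
  · exact ⟨L, hchain, hnodup, hk⟩
  have hne := hL.ne_nil hsne
  have hdeg := hlow _ (hsub _ (L.head_mem hne))
  have hdeg' := hlow _ (hsub _ (L.getLast_mem hne))
  have hts : L.toFinset ⊆ s := fun x hx => hsub x (List.mem_toFinset.mp hx)
  refine ih _ (sdiff_ssubset hts (by simpa using hne)) (lt_card_interedges_sdiff hs hts ?_ ?_)
  · intro x hx w hw hadj
    exact List.mem_toFinset.mpr
      (hL.mem_of_adj hne (by omega) (List.mem_toFinset.mp hx) hw hadj)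
  · rwa [List.toFinset_card_of_nodup hnodup]

theorem exists_isPath_length_of_isChain {L : List V} (hne : L ≠ []) (hchain : L.IsChain G.Adj)
    (hnodup : L.Nodup) : ∃ (u v : V) (p : G.Walk u v), p.IsPath ∧ p.length + 1 = L.length := by
  refine ⟨_, _, Walk.ofSupport L hne hchain, ?_, ?_⟩
  · rwa [Walk.isPath_def, Walk.support_ofSupport]
  · rw [Walk.length_ofSupport]
    have := List.length_pos_iff.mpr hne
    omega

end SimpleGraph

/-- Erdős–Gallai: every graph on `n` vertices with more than `(k-2)n/2` edges
contains a path on `k` vertices. -/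
theorem stmt_0 {V : Type*} [Fintype V] (G : SimpleGraph V) (n k : ℕ)
    (hn : Fintype.card V = n) (hk : 2 ≤ k)
    (he : (k - 2) * n < 2 * G.edgeSet.ncard) :
    ∃ (u v : V) (p : G.Walk u v), p.IsPath ∧ p.length + 1 = k := by
  classical
  have hedges : G.edgeSet.ncard = #G.edgeFinset := by
    rw [← SimpleGraph.coe_edgeFinset, Set.ncard_coe_finset]
  obtain ⟨L, hchain, hnodup, hkL⟩ := G.exists_isChain_nodup_le_length k univ
    (by rwa [card_univ, hn, SimpleGraph.card_interedges_univ, ← hedges])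
  have hlen : (L.take k).length = k := List.length_take_of_le hkL
  rw [← hlen]
  exact SimpleGraph.exists_isPath_length_of_isChain (by rw [← List.length_pos_iff]; omega)
    (hchain.infix (L.take_prefix k).isInfix) (hnodup.sublist (L.take_sublist k))
end

section
/- Every graph on n vertices with more than (k-1)(n-1)/2 edges contains a cycle of length at least k. -/
/-!
Induction on the number of vertices. Suppose `G` has no cycle of length at least `k`, fix a
longest path ending at `v`, and let `S` be the set of starting vertices of longest paths ending
at `v` (Pósa's rotation set); it is nonempty and misses `v`. Let `Q` be a longest path from
`s ∈ S` to `v`. Every neighbour of `s` lies on `Q`, at a position `i ≤ k - 2`, since otherwise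
the chord closes a cycle of length `i + 1 ≥ k`. If `s` is adjacent to both `Q i` and `Q (i + 1)`,
rotating `Q` along the edge `s (Q (i + 1))` gives a longest path starting at `Q i`, so `Q i ∈ S`.
The neighbour positions and their predecessors all lie in `{0, …, k - 2}` and overlap only in
such `i`, whence `2 deg s ≤ (k - 1) + deg_S s`. Summed over `S`, this says that deleting `S`
destroys at most `(k - 1) |S| / 2` edges, so `G - S` still has more than `(k - 1)(|G - S| - 1) / 2`
edges and contains the cycle by induction.
-/

open Finset

namespace SimpleGraph

variable {V : Type*} {G : SimpleGraph V}

namespace Walk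

lemma IsPath.exists_isCycle_of_adj_getVert {u v : V} {p : G.Walk u v} (hp : p.IsPath) {i : ℕ}
    (hi : 2 ≤ i) (hil : i ≤ p.length) (h : G.Adj u (p.getVert i)) :
    ∃ c : G.Walk u u, c.IsCycle ∧ c.length = i + 1 := by
  refine ⟨cons h (p.take i).reverse, ?_, by simp; omega⟩
  rw [isCycle_iff_isPath_tail_and_le_length]
  simp [(hp.take i).reverse]
  omega

lemma IsPath.exists_isPath_of_adj_getVert_succ {u v : V} {p : G.Walk u v} (hp : p.IsPath)
    {i : ℕ} (hi : i < p.length) (h : G.Adj u (p.getVert (i + 1))) :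
    ∃ q : G.Walk (p.getVert i) v, q.IsPath ∧ q.length = p.length := by
  refine ⟨(p.take i).reverse.append (cons h (p.drop (i + 1))), ?_, by simp; omega⟩
  have hperm : ((p.support.take (i + 1)).reverse ++ p.support.drop (i + 1)).Perm p.support :=
    ((List.reverse_perm _).append_right _).trans (by rw [List.take_append_drop])
  rw [isPath_def, support_append, support_cons, List.tail_cons, support_reverse, support_take,
    drop_support_eq_support_drop_min, min_eq_left hi, hperm.nodup_iff]
  exact hp.support_nodup

lemma IsPath.mem_support_of_adj_of_forall_length_le {u v w : V} {p : G.Walk u v}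
    (hp : p.IsPath) (hmax : ∀ q : G.Walk w v, q.IsPath → q.length ≤ p.length) (h : G.Adj w u) :
    w ∈ p.support := by
  by_contra hw
  have := hmax (cons h p) ((cons_isPath_iff h p).mpr ⟨hp, hw⟩)
  simp at this

end Walk

open Walk

lemma exists_isPath_forall_length_le [Finite V] [Nonempty V] :
    ∃ (u v : V) (p : G.Walk u v), p.IsPath ∧
      ∀ (a b : V) (q : G.Walk a b), q.IsPath → q.length ≤ p.length := by
  classical
  have := Fintype.ofFinite V
  let P (n : ℕ) := ∃ (a b : V) (q : G.Walk a b), q.IsPath ∧ q.length = n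
  have hP : ∀ n, P n → n ≤ Fintype.card V := by
    rintro _ ⟨a, b, q, hq, rfl⟩
    exact hq.length_lt.le
  obtain ⟨v⟩ := ‹Nonempty V›
  obtain ⟨u, w, p, hp, hpl⟩ : P (Nat.findGreatest P (Fintype.card V)) :=
    Nat.findGreatest_spec (P := P) (Nat.zero_le _) ⟨v, v, nil, .nil, rfl⟩
  exact ⟨u, w, p, hp, fun a b q hq => hpl ▸ Nat.le_findGreatest (hP _ ⟨a, b, q, hq, rfl⟩)
    ⟨a, b, q, hq, rfl⟩⟩

variable [Fintype V] [DecidableEq V] [DecidableRel G.Adj]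

theorem two_mul_degree_le_of_longest_path {k : ℕ} (hk : 3 ≤ k)
    (hcyc : ∀ (u : V) (c : G.Walk u u), c.IsCycle → c.length < k) {s v : V} {p : G.Walk s v}
    (hp : p.IsPath) (hmax : ∀ (a b : V) (q : G.Walk a b), q.IsPath → q.length ≤ p.length)
    {S : Finset V} (hS : ∀ (w : V) (q : G.Walk w v), q.IsPath → q.length = p.length → w ∈ S) :
    2 * G.degree s ≤ k - 1 + #(G.neighborFinset s ∩ S) := by
  -- `P` holds the positions on `p` just before a neighbour of `s`, `N` those of the neighbours.
  set P := (range p.length).filter (fun i => G.Adj s (p.getVert (i + 1)))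
  set N := P.map ⟨(· + 1), add_left_injective 1⟩
  have hinj := hp.getVert_injOn
  have hP_card : #P = G.degree s := by
    refine card_nbij (fun i => p.getVert (i + 1)) (fun i hi => ?_) (fun i hi j hj hij => ?_) ?_
    · simpa [P] using (mem_filter.mp hi).2
    · simp only [coe_filter, mem_range, Set.mem_ofPred_eq, P] at hi hj
      have := hinj (by simp; omega) (by simp; omega) hij
      omega
    · intro w hw
      simp only [coe_neighborFinset, mem_neighborSet] at hw
      obtain ⟨n, rfl, hn⟩ := mem_support_iff_exists_getVert.mp
        (hp.mem_support_of_adj_of_forall_length_le (hmax _ _) hw.symm)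
      obtain ⟨i, rfl⟩ : ∃ i, n = i + 1 :=
        Nat.exists_eq_add_one.mpr (Nat.pos_of_ne_zero (by rintro rfl; simp at hw))
      exact ⟨i, by simp [P, hw]; omega, rfl⟩
  have hP_lt : ∀ i ∈ P, i + 2 < k := by
    intro i hi
    simp only [mem_filter, mem_range, P] at hi
    rcases Nat.eq_zero_or_pos i with rfl | hi0
    · omega
    obtain ⟨c, hc, hcl⟩ := hp.exists_isCycle_of_adj_getVert (by omega) (by omega) hi.2
    have := hcyc s c hc
    omega
  have hunion : #(P ∪ N) ≤ k - 1 := by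
    refine (card_le_card fun i hi => ?_).trans (card_range (k - 1)).le
    simp only [mem_union, mem_map, N, Function.Embedding.coeFn_mk] at hi
    rcases hi with hi | ⟨j, hj, rfl⟩
    · have := hP_lt i hi
      simp; omega
    · have := hP_lt j hj
      simp; omega
  have hinter : #(P ∩ N) ≤ #(G.neighborFinset s ∩ S) := by
    refine card_le_card_of_injOn (fun i => p.getVert i) (fun i hi => ?_) (fun i hi j hj hij => ?_)
    · simp only [coe_inter, Set.mem_inter_iff, mem_coe, mem_map, N, P, mem_filter, mem_range,
        Function.Embedding.coeFn_mk] at hi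
      obtain ⟨⟨hil, hsucc⟩, j, ⟨-, hj⟩, rfl⟩ := hi
      obtain ⟨q, hq, hql⟩ := hp.exists_isPath_of_adj_getVert_succ hil hsucc
      simp [hj, hS _ q hq hql]
    · simp only [coe_inter, Set.mem_inter_iff, mem_coe, mem_filter, mem_range, P] at hi hj
      exact hinj (by simp; omega) (by simp; omega) hij
  have := card_union_add_card_inter P N
  simp only [N, card_map] at this hunion hinter
  omega

theorem exists_finset_forall_two_mul_degree_le {k : ℕ} (hk : 3 ≤ k)
    (hcyc : ∀ (u : V) (c : G.Walk u u), c.IsCycle → c.length < k) {x y : V} (hxy : G.Adj x y) :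
    ∃ S : Finset V, S.Nonempty ∧ S ≠ univ ∧
      ∀ s ∈ S, 2 * G.degree s ≤ k - 1 + #(G.neighborFinset s ∩ S) := by
  classical
  have : Nonempty V := ⟨x⟩
  obtain ⟨u, v, p, hp, hmax⟩ := G.exists_isPath_forall_length_le
  have hp_pos : 1 ≤ p.length := by simpa using hmax x y _ hxy.isPath_toWalk
  set S := univ.filter fun w => ∃ q : G.Walk w v, q.IsPath ∧ q.length = p.length
  have hS : ∀ (w : V) (q : G.Walk w v), q.IsPath → q.length = p.length → w ∈ S :=
    fun w q hq hql => mem_filter.mpr ⟨mem_univ w, q, hq, hql⟩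
  refine ⟨S, ⟨u, hS u p hp rfl⟩, fun hS_univ => ?_, fun s hs => ?_⟩
  · obtain ⟨-, q, hq, hql⟩ := mem_filter.mp (hS_univ ▸ mem_univ v)
    have := length_eq_zero_iff.mpr (isPath_iff_nil.mp hq)
    omega
  · obtain ⟨-, q, hq, hql⟩ := mem_filter.mp hs
    exact two_mul_degree_le_of_longest_path hk hcyc hq (hql ▸ hmax) (hql ▸ hS)

lemma neighborFinset_inter_eq_filter (u : V) (T : Finset V) :
    G.neighborFinset u ∩ T = T.filter (G.Adj u) := by
  ext; simp [and_comm]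

lemma degree_eq_card_inter_add_card_inter_compl (u : V) (T : Finset V) :
    G.degree u = #(G.neighborFinset u ∩ T) + #(G.neighborFinset u ∩ Tᶜ) := by
  rw [← sdiff_eq_inter_compl, card_inter_add_card_sdiff, card_neighborFinset_eq_degree]

lemma sum_card_neighborFinset_inter_comm (T U : Finset V) :
    ∑ u ∈ T, #(G.neighborFinset u ∩ U) = ∑ u ∈ U, #(G.neighborFinset u ∩ T) := by
  simp_rw [neighborFinset_inter_eq_filter]
  refine (sum_card_bipartiteAbove_eq_sum_card_bipartiteBelow (r := G.Adj)).trans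
    (sum_congr rfl fun u _ => ?_)
  congr 1
  ext
  simp [bipartiteBelow, G.adj_comm]

lemma two_mul_ncard_edgeSet_induce (W : Finset V) :
    2 * (G.induce (W : Set V)).edgeSet.ncard = ∑ u ∈ W, #(G.neighborFinset u ∩ W) := by
  rw [← coe_edgeFinset, Set.ncard_coe_finset, ← sum_degrees_eq_twice_card_edges,
    ← sum_coe_sort W]
  refine sum_congr rfl fun u _ => ?_
  rw [← card_neighborFinset_eq_degree, ← card_map (.subtype (· ∈ (W : Set V)))]
  congr 1
  ext
  simp

theorem sum_degree_le_of_forall_two_mul_degree_le {m : ℕ} (S : Finset V)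
    (hS : ∀ s ∈ S, 2 * G.degree s ≤ m + #(G.neighborFinset s ∩ S)) :
    ∑ v, G.degree v ≤ m * #S + ∑ u ∈ Sᶜ, #(G.neighborFinset u ∩ Sᶜ) := by
  have hS_sum := sum_le_sum hS
  have hsplit (T : Finset V) := sum_congr rfl fun u (_ : u ∈ T) =>
    G.degree_eq_card_inter_add_card_inter_compl u S
  rw [← mul_sum, sum_add_distrib, sum_const, smul_eq_mul, mul_comm #S] at hS_sum
  rw [← sum_add_sum_compl S, hsplit S, hsplit Sᶜ, sum_add_distrib, sum_add_distrib,
    sum_card_neighborFinset_inter_comm Sᶜ S] at *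
  omega

theorem lt_two_mul_ncard_edgeSet_induce_compl {m : ℕ} {S : Finset V} (hS_univ : S ≠ univ)
    (hS : ∀ s ∈ S, 2 * G.degree s ≤ m + #(G.neighborFinset s ∩ S))
    (he : m * (Fintype.card V - 1) < 2 * G.edgeSet.ncard) :
    m * (#Sᶜ - 1) < 2 * (G.induce ((Sᶜ : Finset V) : Set V)).edgeSet.ncard := by
  have hsum := G.sum_degree_le_of_forall_two_mul_degree_le S hS
  rw [sum_degrees_eq_twice_card_edges, ← two_mul_ncard_edgeSet_induce] at hsum
  have hE : G.edgeSet.ncard = #G.edgeFinset := by rw [← coe_edgeFinset, Set.ncard_coe_finset]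
  have hS_lt : #S < Fintype.card V := by
    rw [← card_univ]
    exact card_lt_card (ssubset_univ_iff.mpr hS_univ)
  have hsplit : Fintype.card V - 1 = #S + (#Sᶜ - 1) := by rw [card_compl]; omega
  rw [hsplit, mul_add] at he
  omega

end SimpleGraph

open SimpleGraph in
theorem exists_isCycle_le_length_of_lt_two_mul_ncard_edgeSet {V : Type*} [Finite V]
    (G : SimpleGraph V) {k : ℕ} (hk : 3 ≤ k)
    (he : (k - 1) * (Nat.card V - 1) < 2 * G.edgeSet.ncard) :
    ∃ (u : V) (c : G.Walk u u), c.IsCycle ∧ k ≤ c.length := by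
  induction hn : Nat.card V using Nat.strong_induction_on generalizing V with
  | _ n ih =>
  classical
  have := Fintype.ofFinite V
  by_contra! hcyc
  obtain ⟨e, he_mem⟩ := Set.nonempty_of_ncard_ne_zero (s := G.edgeSet) (by omega)
  induction e using Sym2.ind with | _ x y => ?_
  obtain ⟨S, hS_ne, hS_univ, hS⟩ := exists_finset_forall_two_mul_degree_le hk hcyc he_mem
  rw [Nat.card_eq_fintype_card] at he hn
  have hcard : Nat.card ((Sᶜ : Finset V) : Set V) = #Sᶜ := by
    rw [Nat.card_coe_set_eq, Set.ncard_coe_finset]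
  have hS_card : #Sᶜ < n := by
    rw [card_compl, ← hn]
    exact Nat.sub_lt (Fintype.card_pos_iff.mpr ⟨x⟩) hS_ne.card_pos
  obtain ⟨u, c, hc, hck⟩ := ih #Sᶜ hS_card (G.induce (Sᶜ : Finset V))
    (hcard ▸ lt_two_mul_ncard_edgeSet_induce_compl hS_univ hS he) hcard
  let e := Embedding.induce (G := G) ((Sᶜ : Finset V) : Set V)
  exact (hcyc _ (c.map e.toHom) (hc.map e.injective)).not_ge (by simpa using hck)

/-- Erdős–Gallai: every graph on `n` vertices with more than `(k-1)(n-1)/2` edges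
contains a cycle of length at least `k`. -/
theorem stmt_1 {V : Type*} [Fintype V] (G : SimpleGraph V) (n k : ℕ)
    (hn : Fintype.card V = n) (hk : 3 ≤ k)
    (he : (k - 1) * (n - 1) < 2 * G.edgeSet.ncard) :
    ∃ (u : V) (c : G.Walk u u), c.IsCycle ∧ k ≤ c.length := by
  subst hn
  exact exists_isCycle_le_length_of_lt_two_mul_ncard_edgeSet G hk
    (Nat.card_eq_fintype_card (α := V) ▸ he)
end

section
/- For all integers n ≥ k and a with 1 ≤ a < k/2, the graph H_{n,k,a} contains no cycle of length at least k. -/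
/-!
Let `α, β, γ` be the numbers of vertices of a cycle lying in `A, B, C`. A vertex of `B` has all
its neighbours in `A`, so the successor map along the cycle sends its `B`-vertices injectively to
`A`-vertices: `β ≤ α`. A cycle of length at least `k = a + a + (k - 2a)` would force
`α = β = a ≥ 1` and `γ = k - 2a ≥ 1`; but a cycle meeting both `A` and `C` must step from `C`
to `A`, and that `A`-vertex is not the successor of a `B`-vertex, so in fact `β < α`.
-/

/-- The graph `H_{n,k,a}` on vertex set `Fin n`: `A = [0,a)`, `C = [a, k-a)`,
`B = [k-a, n)`.  Its edges are all pairs inside `A ∪ C = [0, k-a)` together with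
all pairs between `A` and `B`. -/
def Hgraph (n k a : ℕ) : SimpleGraph (Fin n) where
  Adj i j := i ≠ j ∧ ((i.1 < k - a ∧ j.1 < k - a) ∨ i.1 < a ∨ j.1 < a)
  symm := ⟨by rintro i j ⟨hne, h⟩; exact ⟨hne.symm, by tauto⟩⟩
  loopless := ⟨by rintro i ⟨hne, -⟩; exact hne rfl⟩

namespace List

variable {α : Type*}

theorem length_le_countP_add_countP_add_countP {l : List α} {p q r : α → Bool}
    (h : ∀ x ∈ l, p x ∨ q x ∨ r x) : l.length ≤ l.countP p + l.countP q + l.countP r := by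
  induction l with
  | nil => simp
  | cons x l ih =>
    have := ih fun y hy => h y (mem_cons_of_mem _ hy)
    simp only [countP_cons, length_cons]
    rcases h x mem_cons_self with hx | hx | hx <;> simp only [hx] <;> split_ifs <;>
      omega

theorem Nodup.countP_le_card {β : Type*} {l : List α} (hl : l.Nodup) {p : α → Bool}
    {f : α → β} (hf : Function.Injective f) {s : Finset β}
    (h : ∀ x ∈ l, p x → f x ∈ s) : l.countP p ≤ s.card := by
  classical
  have hnd : ((l.filter p).map f).Nodup := (hl.filter p).map hf
  rw [countP_eq_length_filter, ← length_map f, ← toFinset_card_of_nodup hnd]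
  refine Finset.card_le_card fun y hy => ?_
  obtain ⟨x, hx, rfl⟩ := mem_map.mp (mem_toFinset.mp hy)
  exact h x (mem_of_mem_filter hx) (of_mem_filter hx)

end List

namespace SimpleGraph.Walk

variable {V : Type*} {G : SimpleGraph V}

theorem countP_darts_snd {u v : V} (c : G.Walk u v) (p : V → Bool) :
    c.darts.countP (fun d => p d.snd) = c.support.tail.countP p := by
  rw [← map_snd_darts, List.countP_map]
  rfl

theorem map_fst_darts_perm_support_tail {u : V} (c : G.Walk u u) :
    (c.darts.map (·.fst)).Perm c.support.tail := by
  have h : c.support.dropLast ++ [u] = u :: c.support.tail := by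
    rw [dropLast_support_concat, cons_tail_support]
  rw [map_fst_darts, ← List.perm_cons u, ← h]
  exact (List.perm_append_singleton u _).symm

theorem countP_darts_fst {u : V} (c : G.Walk u u) (p : V → Bool) :
    c.darts.countP (fun d => p d.fst) = c.support.tail.countP p := by
  rw [← (map_fst_darts_perm_support_tail c).countP_eq, List.countP_map]
  rfl

theorem countP_support_tail_add_countP_darts {u : V} (c : G.Walk u u) {A B : V → Bool}
    (hB : ∀ x y, G.Adj x y → B x → A y) :
    c.support.tail.countP B + c.darts.countP (fun d => !B d.fst && A d.snd) =
      c.support.tail.countP A := by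
  rw [← countP_darts_fst c B, ← countP_darts_snd c A,
    List.countP_eq_countP_filter_add c.darts (fun d => A d.snd) (fun d => B d.fst),
    List.countP_filter, List.countP_filter]
  congr 1
  · refine List.countP_congr fun d _ => ?_
    simpa using fun hd => hB _ _ d.adj hd
  · exact List.countP_congr fun d _ => by simp [Bool.and_comm]

theorem exists_boundary_dart_of_mem_support [DecidableEq V] {u x y : V} (c : G.Walk u u)
    (S : Set V) (hx : x ∈ c.support) (hy : y ∈ c.support) (hxS : x ∈ S) (hyS : y ∉ S) :
    ∃ d ∈ c.darts, d.fst ∈ S ∧ d.snd ∉ S := by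
  by_cases hu : u ∈ S
  · obtain ⟨d, hd, hdS⟩ := (c.takeUntil y hy).exists_boundary_dart S hu hyS
    exact ⟨d, darts_takeUntil_subset_darts c hy hd, hdS⟩
  · obtain ⟨d, hd, hdS⟩ := (c.dropUntil x hx).exists_boundary_dart S hxS hu
    exact ⟨d, darts_dropUntil_subset_darts c hx hd, hdS⟩

end SimpleGraph.Walk

namespace Hgraph

variable {n k a : ℕ} {x y : Fin n}

theorem val_lt_of_adj_of_sub_le (hak : 2 * a ≤ k) (h : (Hgraph n k a).Adj x y)
    (hx : k - a ≤ x.1) : y.1 < a := by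
  obtain ⟨-, h⟩ := h
  omega

theorem val_lt_sub_of_adj_of_le (hak : 2 * a ≤ k) (h : (Hgraph n k a).Adj x y) (hx : a ≤ x.1) :
    y.1 < k - a := by
  obtain ⟨-, h⟩ := h
  omega

theorem countP_support_tail_sub_le_add_countP_darts {u : Fin n} (hak : 2 * a ≤ k)
    (c : (Hgraph n k a).Walk u u) :
    c.support.tail.countP (k - a ≤ ·.1) +
        c.darts.countP (fun d => !decide (k - a ≤ d.fst.1) && decide (d.snd.1 < a)) =
      c.support.tail.countP (·.1 < a) :=
  c.countP_support_tail_add_countP_darts (A := (·.1 < a)) (B := (k - a ≤ ·.1)) fun _ _ hxy hx =>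
    by simpa using val_lt_of_adj_of_sub_le hak hxy (by simpa using hx)

theorem countP_support_tail_sub_le_le {u : Fin n} (hak : 2 * a ≤ k)
    (c : (Hgraph n k a).Walk u u) :
    c.support.tail.countP (k - a ≤ ·.1) ≤ c.support.tail.countP (·.1 < a) := by
  have := countP_support_tail_sub_le_add_countP_darts hak c
  omega

/-- A closed walk meeting both `A` and `C` has a dart from `C` into `A`, whose tail is not in
`B`. -/
theorem countP_support_tail_sub_le_lt {u : Fin n} (hak : 2 * a ≤ k)
    (c : (Hgraph n k a).Walk u u) (hx : x ∈ c.support) (hxA : x.1 < a) (hy : y ∈ c.support)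
    (hyC : a ≤ y.1 ∧ y.1 < k - a) :
    c.support.tail.countP (k - a ≤ ·.1) < c.support.tail.countP (·.1 < a) := by
  obtain ⟨d, hd, hdC, hdnC⟩ := c.exists_boundary_dart_of_mem_support
    {x | a ≤ x.1 ∧ x.1 < k - a} hy hx hyC (by simp only [Set.mem_ofPred_eq]; omega)
  have hcross : 0 < c.darts.countP
      (fun d => !decide (k - a ≤ d.fst.1) && decide (d.snd.1 < a)) := by
    refine List.countP_pos_iff.mpr ⟨d, hd, ?_⟩
    have := val_lt_sub_of_adj_of_le hak d.adj hdC.1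
    simp only [Set.mem_ofPred_eq] at hdC hdnC
    simp only [Bool.and_eq_true, Bool.not_eq_true', decide_eq_false_iff_not, decide_eq_true_eq]
    omega
  have := countP_support_tail_sub_le_add_countP_darts hak c
  omega

end Hgraph

theorem stmt_3_general (n k a : ℕ) (ha : 1 ≤ a) (hak : 2 * a < k) :
    ∀ (u : Fin n) (c : (Hgraph n k a).Walk u u), c.IsCycle → c.length < k := by
  intro u c hc
  have hT : c.support.tail.Nodup := hc.support_nodup
  have hlen : c.support.tail.length = c.length := by simp
  have hsplit := List.length_le_countP_add_countP_add_countP (l := c.support.tail)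
    (p := fun x : Fin n => x.1 < a) (q := fun x => k - a ≤ x.1)
    (r := fun x => a ≤ x.1 ∧ x.1 < k - a) fun x _ => by simp only [decide_eq_true_eq]; omega
  have hA := hT.countP_le_card (p := fun x : Fin n => x.1 < a) Fin.val_injective
    (s := Finset.range a) fun x _ hx => by simpa using hx
  have hC := hT.countP_le_card (p := fun x : Fin n => a ≤ x.1 ∧ x.1 < k - a) Fin.val_injective
    (s := Finset.Ico a (k - a)) fun x _ hx => by simpa using hx
  simp only [Finset.card_range, Nat.card_Ico] at hA hC
  have hBA := Hgraph.countP_support_tail_sub_le_le hak.le c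
  by_contra! hk
  obtain ⟨x, hxT, hxA⟩ := List.countP_pos_iff.mp
    (show 0 < c.support.tail.countP (·.1 < a) by omega)
  obtain ⟨y, hyT, hyC⟩ := List.countP_pos_iff.mp
    (show 0 < c.support.tail.countP (fun x : Fin n => a ≤ x.1 ∧ x.1 < k - a) by omega)
  have hBA' := Hgraph.countP_support_tail_sub_le_lt hak.le c (List.mem_of_mem_tail hxT)
    (by simpa using hxA) (List.mem_of_mem_tail hyT) (by simpa using hyC)
  omega

/-- `H_{n,k,a}` contains no cycle of length at least `k`. -/
theorem stmt_3 (n k a : ℕ) (hkn : k ≤ n) (ha : 1 ≤ a) (hak : 2 * a < k) :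
    ∀ (u : Fin n) (c : (Hgraph n k a).Walk u u), c.IsCycle → c.length < k :=
  stmt_3_general n k a ha hak
end

section
/- Let n ≥ 4 and G be a 2-connected graph on n vertices, let v be a vertex, and let W(v) = {w ∈ N(v) : N[v] ⊄ N[w]}. If W(v) is nonempty, then there exists w ∈ W(v) such that the graph obtained from G by contracting the edge vw is 2-connected. -/
/-!
Pick `w ∈ W(v)` and a witness `x ∈ N(v) \ N[w]`. Among the neighbours `u` of `v` with
`x ∉ N[u]`, take one for which the fewest vertices are cut off from `x` in `G - {v, u}`. If some
vertex `b` were cut off, walking from `b` to `v` in `G - w` reaches `v` through a neighbour `u'`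
that cuts off strictly fewer vertices, so `G - {v, u}` is connected. Then `G / vu` is
2-connected: deleting the merged vertex leaves `G - {v, u}`, and deleting any other vertex `c`
leaves the image of the connected graph `G - c` under the contraction map.
-/

/-- The simple graph obtained from `H` by contracting the edge `vw`: the vertex
`w` is removed and `v` becomes the merged vertex, adjacent to all former
neighbors of `v` and of `w`. -/
def contractEdge {V : Type*} (H : SimpleGraph V) (v w : V) : SimpleGraph {x : V // x ≠ w} where
  Adj a b := (H.Adj a.1 b.1 ∨ (a.1 = v ∧ H.Adj w b.1) ∨ (b.1 = v ∧ H.Adj w a.1)) ∧ a ≠ b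
  symm := by
    constructor
    rintro a b ⟨h, hne⟩
    refine ⟨?_, hne.symm⟩
    rcases h with h | ⟨h1, h2⟩ | ⟨h1, h2⟩
    · exact Or.inl h.symm
    · exact Or.inr (Or.inr ⟨h1, h2⟩)
    · exact Or.inr (Or.inl ⟨h1, h2⟩)
  loopless := ⟨by rintro a ⟨-, hne⟩; exact hne rfl⟩

def TwoConnected {V : Type*} [Fintype V] (G : SimpleGraph V) : Prop :=
  3 ≤ Fintype.card V ∧ G.Connected ∧ ∀ v : V, (G.induce {w | w ≠ v}).Connected

namespace SimpleGraph

variable {V W : Type*} {G : SimpleGraph V}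

theorem Preconnected.of_surjective_of_adj {H : SimpleGraph W} (hG : G.Preconnected) {f : V → W}
    (hf : Function.Surjective f) (hadj : ∀ ⦃a b⦄, G.Adj a b → f a = f b ∨ H.Adj (f a) (f b)) :
    H.Preconnected := by
  intro x y
  obtain ⟨a, rfl⟩ := hf x
  obtain ⟨b, rfl⟩ := hf y
  have hab := hG a b
  rw [reachable_iff_reflTransGen] at hab ⊢
  refine hab.lift' f fun a b h => ?_
  rcases hadj h with h | h
  · rw [Function.onFun, h]
  · exact Relation.ReflTransGen.single h

theorem Reachable.exists_walk_of_induce {s : Set V} {a b : V} {ha : a ∈ s} {hb : b ∈ s}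
    (h : (G.induce s).Reachable ⟨a, ha⟩ ⟨b, hb⟩) : ∃ p : G.Walk a b, ∀ z ∈ p.support, z ∈ s := by
  obtain ⟨q⟩ := h
  have hmap := Walk.support_map (Embedding.induce s).toHom q
  refine ⟨q.map (Embedding.induce s).toHom, fun z hz => ?_⟩
  have : z ∈ (q.map (Embedding.induce s).toHom).support := hz
  rw [hmap, List.mem_map] at this
  obtain ⟨z, -, rfl⟩ := this
  exact z.2

def ReachableAvoiding (G : SimpleGraph V) (K : Set V) (a b : V) : Prop :=
  ∃ p : G.Walk a b, ∀ z ∈ p.support, z ∉ K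

namespace ReachableAvoiding

variable {K K' : Set V} {a b c : V}

theorem notMem_left (h : G.ReachableAvoiding K a b) : a ∉ K :=
  h.choose_spec a h.choose.start_mem_support

theorem notMem_right (h : G.ReachableAvoiding K a b) : b ∉ K :=
  h.choose_spec b h.choose.end_mem_support

theorem refl (ha : a ∉ K) : G.ReachableAvoiding K a a :=
  ⟨Walk.nil, by simpa using ha⟩

theorem symm (h : G.ReachableAvoiding K a b) : G.ReachableAvoiding K b a := by
  obtain ⟨p, hp⟩ := h
  exact ⟨p.reverse, by simpa using hp⟩

theorem trans (hab : G.ReachableAvoiding K a b) (hbc : G.ReachableAvoiding K b c) :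
    G.ReachableAvoiding K a c := by
  obtain ⟨p, hp⟩ := hab
  obtain ⟨q, hq⟩ := hbc
  refine ⟨p.append q, fun z hz => ?_⟩
  rcases (Walk.mem_support_append_iff p q).mp hz with hz | hz
  exacts [hp z hz, hq z hz]

theorem mono (h : G.ReachableAvoiding K a b) (hK : K' ⊆ K) : G.ReachableAvoiding K' a b := by
  obtain ⟨p, hp⟩ := h
  exact ⟨p, fun z hz hzK => hp z hz (hK hzK)⟩

/-- A walk from `a` that passed through `c` would show `c` reachable from `a`. -/
theorem insert_of_not_reachableAvoiding [DecidableEq V] (h : G.ReachableAvoiding K a b)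
    (hc : ¬ G.ReachableAvoiding K a c) : G.ReachableAvoiding (insert c K) a b := by
  obtain ⟨p, hp⟩ := h
  refine ⟨p, fun z hz hzK => ?_⟩
  rcases hzK with rfl | hzK
  · exact hc ⟨p.takeUntil z hz, fun y hy => hp y (p.support_takeUntil_subset_support hz hy)⟩
  · exact hp z hz hzK

end ReachableAvoiding

theorem Adj.reachableAvoiding {K : Set V} {a b : V} (h : G.Adj a b) (ha : a ∉ K) (hb : b ∉ K) :
    G.ReachableAvoiding K a b :=
  ⟨h.toWalk, by simp [ha, hb]⟩

theorem Walk.exists_adj_reachableAvoiding {K : Set V} {a t : V} (p : G.Walk a t) (ht : t ∈ K)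
    (ha : a ∉ K) (hp : ∀ z ∈ p.support, z ∈ K → z = t) :
    ∃ z, G.Adj z t ∧ G.ReachableAvoiding K a z := by
  induction p with
  | nil => exact absurd ht ha
  | @cons a c t h q ih =>
    by_cases hc : c ∈ K
    · obtain rfl : c = t := hp c (by simp) hc
      exact ⟨a, h, .refl ha⟩
    · obtain ⟨z, hzt, hcz⟩ := ih ht hc fun z hz => hp z (by simp [hz])
      exact ⟨z, hzt, (h.reachableAvoiding ha hc).trans hcz⟩

theorem preconnected_induce_compl_of_reachableAvoiding {K : Set V} {x : V} (hx : x ∉ K)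
    (h : ∀ y ∉ K, G.ReachableAvoiding K x y) : (G.induce Kᶜ).Preconnected := by
  have reach (y : V) (hy : y ∉ K) : (G.induce Kᶜ).Reachable ⟨x, hx⟩ ⟨y, hy⟩ := by
    obtain ⟨p, hp⟩ := h y hy
    exact (p.induce Kᶜ hp).reachable
  exact fun a b => (reach a a.2).symm.trans (reach b b.2)

theorem exists_adj_reachableAvoiding_pair {v w a : V} (hw : (G.induce {y | y ≠ w}).Preconnected)
    (hvw : v ≠ w) (ha : a ∉ ({v, w} : Set V)) : ∃ z, G.Adj z v ∧ G.ReachableAvoiding {v, w} a z := by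
  have haw : a ≠ w := fun h => ha (by simp [h])
  obtain ⟨p, hp⟩ := (hw ⟨a, haw⟩ ⟨v, hvw⟩).exists_walk_of_induce
  refine p.exists_adj_reachableAvoiding (by simp) ha fun z hz hzK => ?_
  rcases hzK with rfl | rfl
  exacts [rfl, absurd rfl (hp z hz)]

def unreachableAvoiding (G : SimpleGraph V) (K : Set V) (x : V) : Set V :=
  {y | y ∉ K ∧ ¬ G.ReachableAvoiding K x y}

variable [DecidableEq V]

/-- `u` is the neighbour of `v` through which a vertex cut off from `x` first reaches `v` in
`G - w`; whatever `x` reaches in `G - {v, w}` it still reaches in `G - {v, u}`, and now also `w`. -/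
theorem exists_adj_ncard_unreachableAvoiding_lt [Finite V]
    (hdel : ∀ c, (G.induce {y | y ≠ c}).Preconnected) {v w x : V} (hvw : v ≠ w)
    (hx : x ∉ ({v, w} : Set V)) (hsep : (G.unreachableAvoiding {v, w} x).Nonempty) :
    ∃ u, G.Adj v u ∧ x ∉ ({v, u} : Set V) ∧ ¬ G.Adj u x ∧
      (G.unreachableAvoiding {v, u} x).ncard < (G.unreachableAvoiding {v, w} x).ncard := by
  obtain ⟨b, hbK, hxb⟩ := hsep
  obtain ⟨u, huv, hbu⟩ := exists_adj_reachableAvoiding_pair (hdel w) hvw hbK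
  have huK : u ∉ ({v, w} : Set V) := hbu.notMem_right
  have hxu : ¬ G.ReachableAvoiding {v, w} x u := fun h => hxb (h.trans hbu.symm)
  have hx' : x ∉ ({v, u} : Set V) := by
    rintro (h | rfl)
    exacts [hx (.inl h), hxu (.refl hx)]
  have hvuw : ({v, u} : Set V) ⊆ insert u {v, w} := by
    rintro z (rfl | rfl) <;> simp
  have hwx : G.ReachableAvoiding {v, u} x w := by
    obtain ⟨z, hzw, hxz⟩ := exists_adj_reachableAvoiding_pair (a := x) (hdel v) hvw.symm
      (by rwa [Set.pair_comm])
    rw [Set.pair_comm] at hxz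
    have hxz' := (hxz.insert_of_not_reachableAvoiding hxu).mono hvuw
    refine hxz'.trans (hzw.reachableAvoiding hxz'.notMem_right ?_)
    rintro (h | h)
    exacts [hvw h.symm, huK (.inr h.symm)]
  refine ⟨u, huv.symm, hx', fun h => hxu (h.symm.reachableAvoiding hx huK), ?_⟩
  refine Set.ncard_lt_ncard ⟨fun y ⟨hyK, hxy⟩ => ⟨?_, ?_⟩, fun h => (h ⟨huK, hxu⟩).1 (by simp)⟩
  · rintro (rfl | rfl)
    exacts [hyK (.inl rfl), hxy hwx]
  · exact fun h => hxy ((h.insert_of_not_reachableAvoiding hxu).mono hvuw)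

theorem exists_adj_preconnected_induce_compl_pair [Finite V]
    (hdel : ∀ c, (G.induce {y | y ≠ c}).Preconnected) {v w x : V} (hvw : G.Adj v w)
    (hx : x ∉ ({v, w} : Set V)) (hwx : ¬ G.Adj w x) :
    ∃ u, G.Adj v u ∧ x ∉ ({v, u} : Set V) ∧ ¬ G.Adj u x ∧
      (G.induce ({v, u} : Set V)ᶜ).Preconnected := by
  let S : Set V := {u | G.Adj v u ∧ x ∉ ({v, u} : Set V) ∧ ¬ G.Adj u x}
  obtain ⟨u, hu, hmin⟩ := S.exists_min_image (fun u => (G.unreachableAvoiding {v, u} x).ncard)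
    S.toFinite ⟨w, hvw, hx, hwx⟩
  refine ⟨u, hu.1, hu.2.1, hu.2.2, preconnected_induce_compl_of_reachableAvoiding hu.2.1 ?_⟩
  intro y hy
  by_contra hxy
  obtain ⟨u', hvu', hxu', hu'x, hlt⟩ :=
    exists_adj_ncard_unreachableAvoiding_lt hdel hu.1.ne hu.2.1 ⟨y, hy, hxy⟩
  exact (hmin u' ⟨hvu', hxu', hu'x⟩).not_gt hlt

end SimpleGraph

open SimpleGraph

section Contraction

variable {V : Type*} {G : SimpleGraph V} {v u : V}

theorem preconnected_induce_contractEdge_ne_merged (hvu : G.Adj v u)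
    (hG : (G.induce ({v, u} : Set V)ᶜ).Preconnected) :
    ((contractEdge G v u).induce {a | a ≠ ⟨v, hvu.ne⟩}).Preconnected := by
  refine hG.of_surjective_of_adj (f := fun z => ⟨⟨z.1, fun h => z.2 (.inr h)⟩,
    fun h => z.2 (.inl (congrArg Subtype.val h))⟩) ?_ fun a b hab => .inr ⟨.inl hab, ?_⟩
  · rintro ⟨⟨a, hau⟩, hav⟩
    refine ⟨⟨a, ?_⟩, rfl⟩
    rintro (rfl | rfl)
    exacts [hav rfl, hau rfl]
  · exact fun h => hab.ne (Subtype.ext (by simpa using h))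

variable [DecidableEq V]

def contractProj (h : v ≠ u) (z : V) : {x : V // x ≠ u} :=
  if hz : z = u then ⟨v, h⟩ else ⟨z, hz⟩

theorem contractProj_of_ne (h : v ≠ u) {z : V} (hz : z ≠ u) : contractProj h z = ⟨z, hz⟩ :=
  dif_neg hz

theorem contractProj_self (h : v ≠ u) : contractProj h u = ⟨v, h⟩ :=
  dif_pos rfl

theorem contractProj_surjective (h : v ≠ u) : Function.Surjective (contractProj h) :=
  fun a => ⟨a.1, contractProj_of_ne h a.2⟩

theorem contractProj_eq_or_adj (hvu : G.Adj v u) {a b : V} (hab : G.Adj a b) :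
    contractProj hvu.ne a = contractProj hvu.ne b ∨
      (contractEdge G v u).Adj (contractProj hvu.ne a) (contractProj hvu.ne b) := by
  refine or_iff_not_imp_left.2 fun hne => ⟨?_, hne⟩
  by_cases ha : a = u
  · subst ha
    have hb : b ≠ a := hab.ne.symm
    rw [contractProj_self, contractProj_of_ne _ hb]
    exact .inr (.inl ⟨rfl, hab⟩)
  · by_cases hb : b = u
    · subst hb
      rw [contractProj_self, contractProj_of_ne _ ha]
      exact .inr (.inr ⟨rfl, hab.symm⟩)
    · rw [contractProj_of_ne _ ha, contractProj_of_ne _ hb]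
      exact .inl hab

theorem preconnected_contractEdge (hvu : G.Adj v u) (hG : G.Preconnected) :
    (contractEdge G v u).Preconnected :=
  hG.of_surjective_of_adj (contractProj_surjective hvu.ne) fun _ _ => contractProj_eq_or_adj hvu

theorem preconnected_induce_contractEdge_ne (hvu : G.Adj v u) {c : {x : V // x ≠ u}} (hcv : c.1 ≠ v)
    (hG : (G.induce {y | y ≠ c.1}).Preconnected) :
    ((contractEdge G v u).induce {a | a ≠ c}).Preconnected := by
  have hproj (z : {y | y ≠ c.1}) : contractProj hvu.ne z.1 ≠ c := by
    by_cases hz : z.1 = u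
    · rw [hz, contractProj_self]
      exact fun h => hcv (congrArg Subtype.val h).symm
    · rw [contractProj_of_ne _ hz]
      exact fun h => z.2 (congrArg Subtype.val h)
  refine hG.of_surjective_of_adj (f := fun z => ⟨contractProj hvu.ne z.1, hproj z⟩) ?_ ?_
  · rintro ⟨⟨a, hau⟩, hac⟩
    exact ⟨⟨a, fun h => hac (Subtype.ext h)⟩, Subtype.ext (contractProj_of_ne _ hau)⟩
  · intro a b hab
    rcases contractProj_eq_or_adj hvu hab with h | h
    exacts [.inl (Subtype.ext h), .inr h]

theorem twoConnected_contractEdge [Fintype V] (hcard : 4 ≤ Fintype.card V) (hG : G.Preconnected)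
    (hdel : ∀ c, (G.induce {y | y ≠ c}).Preconnected) (hvu : G.Adj v u)
    (hvu' : (G.induce ({v, u} : Set V)ᶜ).Preconnected) : TwoConnected (contractEdge G v u) := by
  have hcard' : Fintype.card {x : V // x ≠ u} = Fintype.card V - 1 := by
    rw [Fintype.card_subtype_compl, Fintype.card_subtype_eq]
  refine ⟨by omega, (connected_iff _).2 ⟨preconnected_contractEdge hvu hG,
    ⟨⟨v, hvu.ne⟩⟩⟩, fun c => (connected_iff _).2 ⟨?_, ?_⟩⟩
  · by_cases hcv : c.1 = v
    · obtain rfl : c = ⟨v, hvu.ne⟩ := Subtype.ext hcv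
      exact preconnected_induce_contractEdge_ne_merged hvu hvu'
    · exact preconnected_induce_contractEdge_ne hvu hcv (hdel c.1)
  · obtain ⟨a, hac⟩ := Fintype.exists_ne_of_one_lt_card (by omega) c
    exact ⟨⟨a, hac⟩⟩

end Contraction

/-- If `G` is 2-connected on `n ≥ 4` vertices, `v` is a vertex, and
`W(v) = {w ∈ N(v) : N[v] ⊄ N[w]}` is nonempty, then some `w ∈ W(v)` is such that
contracting `vw` yields a 2-connected graph. -/
theorem stmt_9 {V : Type*} [Fintype V] [DecidableEq V] (G : SimpleGraph V)
    (hn : 4 ≤ Fintype.card V) (h2 : TwoConnected G) (v : V)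
    (hW : ∃ w, G.Adj v w ∧ ¬ insert v (G.neighborSet v) ⊆ insert w (G.neighborSet w)) :
    ∃ w, (G.Adj v w ∧ ¬ insert v (G.neighborSet v) ⊆ insert w (G.neighborSet w)) ∧
      TwoConnected (contractEdge G v w) := by
  obtain ⟨-, hconn, hdel⟩ := h2
  have hdel' c := (hdel c).preconnected
  obtain ⟨w, hvw, hns⟩ := hW
  obtain ⟨x, hxv, hxw⟩ := Set.not_subset.mp hns
  simp only [Set.mem_insert_iff, mem_neighborSet, not_or] at hxv hxw
  have hvx : G.Adj v x := hxv.resolve_left fun h => hxw.2 (h ▸ hvw.symm)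
  obtain ⟨u, hvu, hxu, hux, hpre⟩ :=
    exists_adj_preconnected_induce_compl_pair hdel' hvw (by simp [hvx.ne', hxw.1]) hxw.2
  refine ⟨u, ⟨hvu, fun hsub => ?_⟩, twoConnected_contractEdge hn hconn.preconnected hdel' hvu hpre⟩
  rcases hsub (.inr hvx) with h | h
  exacts [hxu (.inr h), hux h]
end

section
/- If G is a 2-connected graph and C is a longest cycle in G, then no two consecutive vertices of C form a vertex cut of G. -/
namespace SimpleGraph.Walk

variable {V : Type*} {G : SimpleGraph V}

lemma penultimate_tail {u v : V} (p : G.Walk u v) (hp : 2 ≤ p.length) :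
    p.tail.penultimate = p.penultimate := by
  simp only [penultimate, getVert_tail, length_tail]
  congr 1
  omega

lemma IsCycle.snd_eq_or_penultimate_eq {x y : V} {d : G.Walk x x} (hd : d.IsCycle)
    (h : s(x, y) ∈ d.edges) : d.snd = y ∨ d.penultimate = y := by
  rw [← d.cons_tail_eq hd.not_nil, edges_cons, List.mem_cons] at h
  rcases h with h | h
  · left
    rcases Sym2.eq_iff.1 h with ⟨-, rfl⟩ | ⟨hx, -⟩
    · rfl
    · exact absurd hx (d.adj_snd hd.not_nil).ne
  · right
    rw [← d.penultimate_tail (by have := hd.three_le_length; omega)]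
    exact (hd.isPath_tail.eq_penultimate_of_mem_edges h).symm

lemma IsCycle.exists_isPath_of_mem_edges {u x y : V} {c : G.Walk u u} (hc : c.IsCycle)
    (h : s(x, y) ∈ c.edges) : ∃ p : G.Walk x y, p.IsPath ∧ p.length + 1 = c.length := by
  classical
  have hx : x ∈ c.support := c.fst_mem_support_of_mem_edges h
  have hd : (c.rotate x hx).IsCycle := hc.rotate hx
  rcases hd.snd_eq_or_penultimate_eq ((c.rotate_edges x hx).mem_iff.2 h) with hy | hy
  · refine ⟨((c.rotate x hx).tail.copy hy rfl).reverse, ?_, ?_⟩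
    · exact ((isPath_copy _ _ _).2 hd.isPath_tail).reverse
    · simpa using length_tail_add_one hd.not_nil
  · refine ⟨(c.rotate x hx).dropLast.copy rfl hy, ?_, ?_⟩
    · simpa using hd.isPath_dropLast
    · simpa using length_dropLast_add_one hd.not_nil

lemma exists_walk_within_of_forall_adj {D : Set V} {a t : V} (p : G.Walk a t)
    (ha : a ∈ D) (hD : ∀ u ∈ D, ∀ w ∈ p.support, G.Adj u w → w ∈ D ∨ w = t) :
    ∃ q : G.Walk a t, ∀ v ∈ q.support, v ∈ D ∨ v = t := by
  induction p with
  | nil => exact ⟨nil, by simp [ha]⟩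
  | @cons a b t h p ih =>
    rcases hD a ha b (by simp) h with hb | rfl
    · obtain ⟨q, hq⟩ := ih hb fun u hu w hw => hD u hu w (by simp [hw])
      exact ⟨cons h q, by simpa [ha] using hq⟩
    · exact ⟨cons h nil, by simp [ha]⟩

lemma two_le_length_of_notMem_edges {u v : V} (p : G.Walk u v) (huv : u ≠ v)
    (h : s(u, v) ∉ p.edges) : 2 ≤ p.length := by
  cases p with
  | nil => exact absurd rfl huv
  | cons _ p => cases p with
    | nil => simp at h
    | cons => simp

lemma IsPath.exists_walk_from_snd_avoiding_ends {x y w : V} {P : G.Walk x y} (hP : P.IsPath)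
    (hw : w ∈ P.support) (hwx : w ≠ x) (hwy : w ≠ y) :
    ∃ q : G.Walk P.snd w, ∀ v ∈ q.support, v ≠ x ∧ v ≠ y := by
  classical
  cases P with
  | nil => exact absurd (by simpa using hw) hwx
  | cons h p =>
    rw [cons_isPath_iff] at hP
    have hw' : w ∈ p.support := by simpa [hwx] using hw
    rw [snd_cons]
    refine ⟨p.takeUntil w hw', fun v hv => ⟨?_, ?_⟩⟩
    · rintro rfl
      exact hP.2 (p.support_takeUntil_subset_support hw' hv)
    · rintro rfl
      exact endpoint_notMem_support_takeUntil hP.1 hw' hwy.symm hv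

end SimpleGraph.Walk

namespace SimpleGraph

variable {V : Type*} {G : SimpleGraph V}


lemma exists_walk_through_of_neighbors_subset {x y d : V} {D : Set V}
    (hx : (G.induce {w | w ≠ x}).Preconnected) (hyx : y ≠ x) (hxD : x ∉ D) (hd : d ∈ D)
    (hD : ∀ u ∈ D, ∀ w, G.Adj u w → w ∈ D ∨ w = x ∨ w = y) :
    ∃ q : G.Walk d y, ∀ v ∈ q.support, v ∈ D ∨ v = y := by
  obtain ⟨W⟩ := hx ⟨d, fun h => hxD (h ▸ hd)⟩ ⟨y, hyx⟩
  refine (W.map (Embedding.induce _).toHom).exists_walk_within_of_forall_adj hd ?_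
  intro u hu w hw huw
  simp only [Walk.support_map, List.mem_map] at hw
  obtain ⟨w', -, rfl⟩ := hw
  exact (hD u hu _ huw).imp_right (Or.resolve_left · w'.2)

lemma exists_isPath_through_of_neighbors_subset {x y : V} {D : Set V}
    (hx : (G.induce {w | w ≠ x}).Preconnected) (hy : (G.induce {w | w ≠ y}).Preconnected)
    (hxy : x ≠ y) (hxD : x ∉ D) (hyD : y ∉ D) (hDne : D.Nonempty)
    (hD : ∀ u ∈ D, ∀ w, G.Adj u w → w ∈ D ∨ w = x ∨ w = y) :
    ∃ Q : G.Walk x y, Q.IsPath ∧ 2 ≤ Q.length ∧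
      ∀ v ∈ Q.support, v ∈ D ∨ v = x ∨ v = y := by
  classical
  obtain ⟨d, hd⟩ := hDne
  obtain ⟨q₁, hq₁⟩ := exists_walk_through_of_neighbors_subset hx hxy.symm hxD hd hD
  obtain ⟨q₂, hq₂⟩ := exists_walk_through_of_neighbors_subset hy hxy hyD hd
    fun u hu w h => (hD u hu w h).imp_right Or.symm
  set R : G.Walk x y := q₂.reverse.append q₁
  have hR : ∀ v ∈ R.support, v ∈ D ∨ v = x ∨ v = y := by
    intro v hv
    rcases (Walk.mem_support_append_iff _ _).1 hv with hv | hv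
    · rcases hq₂ v (by simpa using hv) with h | h <;> simp [h]
    · rcases hq₁ v hv with h | h <;> simp [h]
  have hRxy : s(x, y) ∉ R.edges := by
    rw [Walk.edges_append, List.mem_append, Walk.edges_reverse, List.mem_reverse]
    rintro (h | h)
    · rcases hq₂ y (q₂.snd_mem_support_of_mem_edges h) with h | h
      exacts [hyD h, hxy h.symm]
    · rcases hq₁ x (q₁.fst_mem_support_of_mem_edges h) with h | h
      exacts [hxD h, hxy h]
  refine ⟨R.bypass, R.bypass_isPath, ?_, fun v hv => hR v (R.support_bypass_subset_support hv)⟩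
  exact R.bypass.two_le_length_of_notMem_edges hxy
    fun h => hRxy (R.edges_bypass_subset_edges h)

lemma exists_isPath_internally_disjoint_of_not_preconnected {x y : V}
    (hx : (G.induce {w | w ≠ x}).Preconnected) (hy : (G.induce {w | w ≠ y}).Preconnected)
    (hS : ¬ (G.induce {w | w ≠ x ∧ w ≠ y}).Preconnected)
    {P : G.Walk x y} (hP : P.IsPath) (hlen : 2 ≤ P.length) :
    ∃ Q : G.Walk x y, Q.IsPath ∧ 2 ≤ Q.length ∧
      Q.support.tail.Disjoint P.reverse.support.tail := by
  set S : Set V := {w | w ≠ x ∧ w ≠ y}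
  have hxy : x ≠ y := by
    rintro rfl
    simp [Walk.length_eq_zero_iff.2 (Walk.isPath_iff_nil.1 hP)] at hlen
  have hzS : P.snd ∈ S :=
    ⟨fun h => by simpa using (hP.getVert_eq_start_iff (by omega)).1 h,
     fun h => by have := (hP.getVert_eq_end_iff (by omega)).1 h; omega⟩
  set D : Set V := {w | ∃ hw : w ∈ S, ¬ (G.induce S).Reachable ⟨P.snd, hzS⟩ ⟨w, hw⟩}
  have hDne : D.Nonempty := by
    by_contra! hD
    simp only [D, Set.eq_empty_iff_forall_notMem, Set.mem_ofPred_eq, not_exists, not_not] at hD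
    exact hS fun a b => (hD a a.2).symm.trans (hD b b.2)
  have hDcl : ∀ u ∈ D, ∀ w, G.Adj u w → w ∈ D ∨ w = x ∨ w = y := by
    rintro u ⟨huS, hu⟩ w huw
    by_cases hwS : w ∈ S
    · have hwu : (G.induce S).Adj ⟨w, hwS⟩ ⟨u, huS⟩ := huw.symm
      exact Or.inl ⟨hwS, fun h => hu (h.trans hwu.reachable)⟩
    · simp only [S, Set.mem_ofPred_eq, not_and_or, not_not] at hwS
      exact Or.inr hwS
  obtain ⟨Q, hQ, hQlen, hQD⟩ := exists_isPath_through_of_neighbors_subset hx hy hxy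
    (fun h => h.1.1 rfl) (fun h => h.1.2 rfl) hDne hDcl
  refine ⟨Q, hQ, hQlen, fun v hvQ hvP => ?_⟩
  have hvx : v ≠ x := by
    rintro rfl
    exact (List.nodup_cons.1 (Q.cons_tail_support ▸ hQ.support_nodup)).1 hvQ
  have hvy : v ≠ y := by
    rintro rfl
    exact (List.nodup_cons.1 (P.reverse.cons_tail_support ▸ hP.reverse.support_nodup)).1 hvP
  rcases hQD v (List.mem_of_mem_tail hvQ) with ⟨hvS, hnr⟩ | rfl | rfl
  · obtain ⟨q, hq⟩ := hP.exists_walk_from_snd_avoiding_ends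
      (by simpa using List.mem_of_mem_tail hvP) hvx hvy
    exact hnr ⟨q.induce S hq⟩
  · exact hvx rfl
  · exact hvy rfl

theorem exists_isCycle_length_ge_of_not_preconnected {x y : V}
    (hx : (G.induce {w | w ≠ x}).Preconnected) (hy : (G.induce {w | w ≠ y}).Preconnected)
    (hS : ¬ (G.induce {w | w ≠ x ∧ w ≠ y}).Preconnected)
    {P : G.Walk x y} (hP : P.IsPath) (hlen : 2 ≤ P.length) :
    ∃ (w : V) (c : G.Walk w w), c.IsCycle ∧ P.length + 2 ≤ c.length := by
  obtain ⟨Q, hQ, hQlen, hdisj⟩ :=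
    exists_isPath_internally_disjoint_of_not_preconnected hx hy hS hP hlen
  refine ⟨x, Q.append P.reverse, hQ.isCycle_append hP.reverse hdisj ?_, ?_⟩
  · simp only [Walk.length_reverse]
    omega
  · simp only [Walk.length_append, Walk.length_reverse]
    omega

end SimpleGraph

/-- If `G` is 2-connected and `C` is a longest cycle in `G`, then no two
consecutive vertices of `C` (i.e. endpoints of an edge of `C`) form a vertex cut:
deleting them leaves a graph that is still preconnected. -/
theorem stmt_13 {V : Type*} [Fintype V] (G : SimpleGraph V) (h2 : TwoConnected G)
    (u : V) (c : G.Walk u u) (hc : c.IsCycle)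
    (hmax : ∀ (w : V) (c' : G.Walk w w), c'.IsCycle → c'.length ≤ c.length)
    (x y : V) (hxy : s(x, y) ∈ c.edges) :
    (G.induce {w | w ≠ x ∧ w ≠ y}).Preconnected := by
  by_contra hS
  obtain ⟨P, hP, hPlen⟩ := hc.exists_isPath_of_mem_edges hxy
  obtain ⟨w, c', hc', hlen⟩ := SimpleGraph.exists_isCycle_length_ge_of_not_preconnected
    (h2.2.2 x).preconnected (h2.2.2 y).preconnected hS hP (by have := hc.three_le_length; omega)
  have := hmax w c' hc'
  omega
end

section
/- Let p ≥ 6 and let M be a matching in the complete graph K_p. Then any two edges of K_p - M lie on a common Hamiltonian cycle of K_p - M. -/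
/-! In `K_p - M` every vertex has at most one non-neighbour. So a path can be extended greedily
through any set of at least three further vertices to any prescribed end vertex; with two further
vertices this fails only when they are matched to each other. Two edges `xm`, `my` with a common
vertex thus extend to a Hamiltonian cycle `x m y … x`. For disjoint edges `ab`, `cd` the vertex `b`
is adjacent to `c` or to `d`, giving a path `a b c d` (after renaming) to extend; in the exceptional
case `p = 6` with the remaining vertices `u, v` matched, `a b u c d v a` is the cycle. -/

open Finset

namespace SimpleGraph

variable {V : Type*} {G : SimpleGraph V}

theorem exists_isHamiltonianCycle_of_isChain [DecidableEq V] {u : V} {l : List V}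
    (hnd : (u :: l).Nodup) (hall : ∀ v, v ∈ u :: l) (hlen : 2 ≤ l.length)
    (hchain : (u :: l ++ [u]).IsChain G.Adj) :
    ∃ c : G.Walk u u, c.IsHamiltonianCycle ∧ c.support = u :: l ++ [u] := by
  obtain ⟨v, w, l, rfl⟩ : ∃ v w l', l = v :: w :: l' := by
    match l, hlen with
    | v :: w :: l', _ => exact ⟨v, w, l', rfl⟩
  have hr : (w :: (l ++ [u])).IsChain G.Adj := hchain.of_cons.of_cons
  let q : G.Walk v u :=
    .cons hchain.of_cons.rel ((Walk.ofSupport _ (List.cons_ne_nil _ _) hr).copy rfl (by simp))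
  have hqs : q.support = v :: w :: l ++ [u] :=
    congrArg (v :: ·) ((Walk.support_copy _ _ _).trans (Walk.support_ofSupport _ _))
  have hqnd : (v :: w :: l ++ [u]).Nodup := (List.perm_append_singleton _ _).nodup_iff.2 hnd
  have hq : q.IsPath := (Walk.isPath_def q).2 (hqs ▸ hqnd)
  refine ⟨.cons hchain.rel q, ?_, by simp [hqs]⟩
  rw [Walk.isHamiltonianCycle_iff_isCycle_and_support_count_tail_eq_one]
  refine ⟨(Walk.cons_isCycle_iff q _).2 ⟨hq, fun huv => ?_⟩, fun x => ?_⟩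
  · have huw : u = w := (hq.eq_snd_of_mem_edges (Sym2.eq_swap ▸ huv)).trans (by simp [q])
    simp [huw] at hnd
  · rw [Walk.support_cons, List.tail_cons, hqs]
    exact List.count_eq_one_of_mem hqnd ((List.perm_append_singleton _ _).mem_iff.2 (hall x))

theorem fromEdgeSet_neighborSet_subsingleton {M : Set (Sym2 V)}
    (hM : ∀ e ∈ M, ∀ f ∈ M, e ≠ f → ∀ x, x ∈ e → x ∉ f) (u : V) :
    ((fromEdgeSet M).neighborSet u).Subsingleton := by
  intro v hv w hw
  by_contra hvw
  exact hM _ hv.1 _ hw.1 (fun h => hvw (Sym2.congr_right.1 h)) u (Sym2.mem_mk_left u v)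
    (Sym2.mem_mk_left u w)

section

variable {u v w x z : V} {S : Finset V}

theorem adj_of_not_adj (hG : ∀ v, (Gᶜ.neighborSet v).Subsingleton) (huv : u ≠ v)
    (h : ¬G.Adj u v) (huw : u ≠ w) (hvw : v ≠ w) : G.Adj u w := by
  by_contra h'
  exact hvw (hG u (show Gᶜ.Adj u v from ⟨huv, h⟩) (show Gᶜ.Adj u w from ⟨huw, h'⟩))

theorem adj_and_adj_or_adj_and_adj (hG : ∀ v, (Gᶜ.neighborSet v).Subsingleton) (hxz : x ≠ z)
    (huv : G.Adj u v) (hxu : x ≠ u) (hxv : x ≠ v) (hzu : z ≠ u) (hzv : z ≠ v) :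
    G.Adj x u ∧ G.Adj v z ∨ G.Adj x v ∧ G.Adj u z := by
  by_cases hxu' : G.Adj x u
  · by_cases hvz : G.Adj v z
    · exact .inl ⟨hxu', hvz⟩
    · refine .inr ⟨(adj_of_not_adj hG hzv.symm hvz hxv.symm hxz.symm).symm, ?_⟩
      by_contra huz
      exact huv.ne (hG z (show Gᶜ.Adj z u from ⟨hzu, fun h => huz h.symm⟩)
        (show Gᶜ.Adj z v from ⟨hzv, fun h => hvz h.symm⟩))
  · exact .inr ⟨adj_of_not_adj hG hxu hxu' hxv huv.ne,
      adj_of_not_adj hG hxu.symm (fun h => hxu' h.symm) hzu.symm hxz⟩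

theorem exists_mem_adj (hG : ∀ v, (Gᶜ.neighborSet v).Subsingleton) (hx : x ∉ S)
    (hcard : 2 ≤ #S) : ∃ v ∈ S, G.Adj x v := by
  obtain ⟨a, ha, b, hb, hab⟩ := one_lt_card.1 hcard
  by_cases hxa : G.Adj x a
  · exact ⟨a, ha, hxa⟩
  · exact ⟨b, hb, adj_of_not_adj hG (ne_of_mem_of_not_mem ha hx).symm hxa
      (ne_of_mem_of_not_mem hb hx).symm hab⟩

variable [DecidableEq V]

theorem exists_mem_adj_isClique_erase (hG : ∀ v, (Gᶜ.neighborSet v).Subsingleton) (hx : x ∉ S)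
    (hcard : 3 ≤ #S) :
    ∃ v ∈ S, G.Adj x v ∧ (#(S.erase v) = 2 → G.IsClique (S.erase v : Set V)) := by
  by_cases hcard4 : 4 ≤ #S
  · obtain ⟨v, hv, hxv⟩ := exists_mem_adj hG hx (by omega)
    exact ⟨v, hv, hxv, fun h => by rw [card_erase_of_mem hv] at h; omega⟩
  by_cases hcl : G.IsClique (S : Set V)
  · obtain ⟨v, hv, hxv⟩ := exists_mem_adj hG hx (by omega)
    exact ⟨v, hv, hxv, fun _ => hcl.subset (by simp)⟩
  obtain ⟨u, hu, w, hw, huw, hnadj⟩ : ∃ u ∈ S, ∃ w ∈ S, u ≠ w ∧ ¬G.Adj u w := by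
    simpa [IsClique, Set.Pairwise] using hcl
  have hxu := ne_of_mem_of_not_mem hu hx
  have hxw := ne_of_mem_of_not_mem hw hx
  refine ⟨u, hu, (adj_of_not_adj hG huw hnadj hxu hxw).symm, fun h2 => ?_⟩
  -- `w` is one of the two remaining vertices, and its only non-neighbour `u` is gone.
  obtain ⟨a, b, hab, hS'⟩ := card_eq_two.1 h2
  have hwS' : w ∈ S.erase u := mem_erase.2 ⟨huw.symm, hw⟩
  have haS' : a ∈ S.erase u := by simp [hS']
  have hbS' : b ∈ S.erase u := by simp [hS']
  rw [hS', coe_pair, isClique_pair]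
  intro _
  have hnadj' : ¬G.Adj w u := fun h => hnadj h.symm
  rw [hS', mem_insert, mem_singleton] at hwS'
  rcases hwS' with rfl | rfl
  · exact adj_of_not_adj hG huw.symm hnadj' hab (ne_of_mem_erase hbS').symm
  · exact (adj_of_not_adj hG huw.symm hnadj' hab.symm (ne_of_mem_erase haS').symm).symm

theorem exists_isChain_through (hG : ∀ v, (Gᶜ.neighborSet v).Subsingleton) (hxz : x ≠ z)
    (hx : x ∉ S) (hz : z ∉ S) (hcard : 2 ≤ #S) (hpair : #S = 2 → G.IsClique (S : Set V)) :
    ∃ L : List V, L.Nodup ∧ (∀ y, y ∈ L ↔ y ∈ S) ∧ (x :: L ++ [z]).IsChain G.Adj := by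
  induction S using Finset.strongInduction generalizing x with
  | H S ih =>
  rcases hcard.eq_or_lt with h2 | h3
  · obtain ⟨u, v, huv, rfl⟩ := card_eq_two.1 h2.symm
    have hadj : G.Adj u v := isClique_pair.1 (by simpa using hpair h2.symm) huv
    simp only [mem_insert, mem_singleton, not_or] at hx hz
    rcases adj_and_adj_or_adj_and_adj hG hxz hadj hx.1 hx.2 hz.1 hz.2 with ⟨hxu, hvz⟩ | ⟨hxv, huz⟩
    · exact ⟨[u, v], by simp [huv], by simp,
        .cons_cons hxu (.cons_cons hadj (.cons_cons hvz (.singleton _)))⟩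
    · exact ⟨[v, u], by simp [huv.symm], by simp [or_comm],
        .cons_cons hxv (.cons_cons hadj.symm (.cons_cons huz (.singleton _)))⟩
  · obtain ⟨v, hv, hxv, hpair'⟩ := exists_mem_adj_isClique_erase hG hx h3
    obtain ⟨L, hnd, hmem, hchain⟩ := ih (S.erase v) (erase_ssubset hv)
      (ne_of_mem_of_not_mem hv hz) (notMem_erase v S) (fun h => hz (mem_of_mem_erase h))
      (by rw [card_erase_of_mem hv]; omega) hpair'
    refine ⟨v :: L, List.nodup_cons.2 ⟨fun h => notMem_erase v S ((hmem v).1 h), hnd⟩,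
      fun y => ?_, .cons_cons hxv hchain⟩
    rw [List.mem_cons, hmem, mem_erase]
    by_cases hyv : y = v <;> simp [hyv, hv]

theorem exists_isHamiltonianCycle_prefix [Fintype V]
    (hG : ∀ v, (Gᶜ.neighborSet v).Subsingleton) {P : List V} (hnd : (u :: P ++ [x]).Nodup)
    (hchain : (u :: P ++ [x]).IsChain G.Adj) (hS : ∀ v, v ∈ S ↔ v ∉ u :: P ++ [x])
    (hcard : 2 ≤ #S) (hpair : #S = 2 → G.IsClique (S : Set V)) :
    ∃ c : G.Walk u u, c.IsHamiltonianCycle ∧ u :: P ++ [x] <+: c.support := by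
  have hxu : x ≠ u := by
    intro h
    simp [h] at hnd
  obtain ⟨L, hLnd, hL, hLchain⟩ := exists_isChain_through hG hxu ((hS x).not.2 (by simp))
    ((hS u).not.2 (by simp)) hcard hpair
  have hcyc : u :: P ++ x :: L = (u :: P ++ [x]) ++ L := by simp
  obtain ⟨c, hc, hsupp⟩ := exists_isHamiltonianCycle_of_isChain (l := P ++ x :: L) (G := G)
    (by
      rw [← List.cons_append, hcyc, List.nodup_append]
      exact ⟨hnd, hLnd, fun a ha b hb hab => (hS b).1 ((hL b).1 hb) (hab ▸ ha)⟩)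
    (fun v => by
      rw [← List.cons_append, hcyc, List.mem_append, hL, hS]
      exact em _)
    (by
      have hlen : #S = L.length := by
        rw [← List.toFinset_card_of_nodup hLnd]
        congr 1
        ext y
        simp [hL]
      rw [List.length_append, List.length_cons]
      omega)
    (by
      have : u :: (P ++ x :: L) ++ [u] = (u :: P) ++ x :: (L ++ [u]) := by simp
      rw [this]
      exact List.isChain_split.2 ⟨hchain, hLchain⟩)
  exact ⟨c, hc, hsupp ▸ ⟨L ++ [u], by simp⟩⟩

variable [Fintype V]

theorem exists_isHamiltonianCycle_of_adj_adj (hV : 6 ≤ Fintype.card V)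
    (hG : ∀ v, (Gᶜ.neighborSet v).Subsingleton) {m : V} (hxm : G.Adj x m) (hmz : G.Adj m z)
    (hxz : x ≠ z) : ∃ c : G.Walk x x, c.IsHamiltonianCycle ∧ [x, m, z] <+: c.support := by
  have hcard : #({x, m, z} : Finset V) = 3 := card_eq_three.2 ⟨x, m, z, hxm.ne, hxz, hmz.ne, rfl⟩
  exact exists_isHamiltonianCycle_prefix (P := [m]) (S := {x, m, z}ᶜ) hG
    (by simp [hxm.ne, hxz, hmz.ne]) (.cons_cons hxm (.cons_cons hmz (.singleton _))) (by simp)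
    (by rw [card_compl, hcard]; omega) (fun h => by rw [card_compl, hcard] at h; omega)

theorem exists_isHamiltonianCycle_of_adj_adj_adj (hV : 6 ≤ Fintype.card V)
    (hG : ∀ v, (Gᶜ.neighborSet v).Subsingleton) {a b c d : V} (hab : G.Adj a b) (hbc : G.Adj b c)
    (hcd : G.Adj c d) (hac : a ≠ c) (had : a ≠ d) (hbd : b ≠ d) :
    ∃ (v : V) (p : G.Walk v v), p.IsHamiltonianCycle ∧ [a, b] <:+: p.support ∧
      [c, d] <:+: p.support := by
  have hcard : #({a, b, c, d} : Finset V) = 4 :=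
    card_eq_four.2 ⟨a, b, c, d, hab.ne, hac, had, hbc.ne, hbd, hcd.ne, rfl⟩
  set S : Finset V := {a, b, c, d}ᶜ with hS
  by_cases hpair : #S = 2 → G.IsClique (S : Set V)
  · obtain ⟨p, hp, hpre⟩ := exists_isHamiltonianCycle_prefix (P := [b, c]) (x := d) (S := S) hG
      (by simp [hab.ne, hac, had, hbc.ne, hbd, hcd.ne])
      (.cons_cons hab (.cons_cons hbc (.cons_cons hcd (.singleton _)))) (by simp [hS])
      (by rw [card_compl, hcard]; omega) hpair
    exact ⟨a, p, hp, (List.IsPrefix.isInfix ⟨[c, d], rfl⟩).trans hpre.isInfix,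
      List.IsInfix.trans ⟨[a, b], [], rfl⟩ hpre.isInfix⟩
  -- The two remaining vertices are non-adjacent, hence adjacent to all of `a, b, c, d`.
  obtain ⟨h2, hcl⟩ := Classical.not_imp.1 hpair
  obtain ⟨u, v, huv, hSuv⟩ := card_eq_two.1 h2
  have hnadj : ¬G.Adj u v := fun h => hcl (by simpa [hSuv] using fun _ => h)
  have hu : u ∈ S := by simp [hSuv]
  have hv : v ∈ S := by simp [hSuv]
  simp only [hS, mem_compl, mem_insert, mem_singleton, not_or] at hu hv
  obtain ⟨hua, hub, huc, hud⟩ := hu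
  obtain ⟨hva, hvb, hvc, hvd⟩ := hv
  obtain ⟨p, hp, hsupp⟩ := exists_isHamiltonianCycle_of_isChain (u := a) (l := [b, u, c, d, v])
    (G := G) (by simp [hab.ne, hac, had, hbc.ne, hbd, hcd.ne, huv, huc, hud, Ne.symm hua, Ne.symm hva,
      Ne.symm hub, Ne.symm hvb, Ne.symm hvc, Ne.symm hvd])
    (fun y => by
      by_contra hy
      simp only [List.mem_cons, List.not_mem_nil, or_false, not_or] at hy
      have : y ∈ S := by simp [hS, hy.1, hy.2.1, hy.2.2.2.1, hy.2.2.2.2.1]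
      simp [hSuv, hy.2.2.1, hy.2.2.2.2.2] at this)
    (by simp)
    (.cons_cons hab <| .cons_cons (adj_of_not_adj hG huv hnadj hub hvb).symm <|
      .cons_cons (adj_of_not_adj hG huv hnadj huc hvc) <| .cons_cons hcd <|
      .cons_cons (adj_of_not_adj hG huv.symm (fun h => hnadj h.symm) hvd hud).symm <|
      .cons_cons (adj_of_not_adj hG huv.symm (fun h => hnadj h.symm) hva hua) (.singleton _))
  exact ⟨a, p, hp, hsupp ▸ ⟨[], _, rfl⟩, hsupp ▸ ⟨[a, b, u], _, rfl⟩⟩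

theorem exists_isHamiltonianCycle_mem_edges (hV : 6 ≤ Fintype.card V)
    (hG : ∀ v, (Gᶜ.neighborSet v).Subsingleton) {e₁ e₂ : Sym2 V} (h₁ : e₁ ∈ G.edgeSet)
    (h₂ : e₂ ∈ G.edgeSet) (hne : e₁ ≠ e₂) :
    ∃ (v : V) (p : G.Walk v v), p.IsHamiltonianCycle ∧ e₁ ∈ p.edges ∧ e₂ ∈ p.edges := by
  by_cases hshare : ∃ m, m ∈ e₁ ∧ m ∈ e₂
  · obtain ⟨m, hm₁, hm₂⟩ := hshare
    obtain ⟨x, rfl⟩ := Sym2.mem_iff_exists.1 hm₁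
    obtain ⟨z, rfl⟩ := Sym2.mem_iff_exists.1 hm₂
    obtain ⟨p, hp, hpre⟩ := exists_isHamiltonianCycle_of_adj_adj hV hG (G.adj_symm h₁) h₂
      (fun h : x = z => hne (by rw [h]))
    refine ⟨x, p, hp, Walk.infix_support_iff_mem_edges.1 (.inr ?_),
      Walk.infix_support_iff_mem_edges.1 (.inl ?_)⟩
    · exact (List.IsPrefix.isInfix ⟨[z], rfl⟩).trans hpre.isInfix
    · exact List.IsInfix.trans ⟨[x], [], rfl⟩ hpre.isInfix
  induction e₁ using Sym2.ind with | _ a b => ?_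
  induction e₂ using Sym2.ind with | _ c d => ?_
  simp only [Sym2.mem_iff, not_exists, not_and, not_or] at hshare
  obtain ⟨hac, had⟩ := hshare a (.inl rfl)
  obtain ⟨hbc, hbd⟩ := hshare b (.inr rfl)
  rw [mem_edgeSet] at h₁ h₂
  by_cases hbc' : G.Adj b c
  · obtain ⟨v, p, hp, hab, hcd⟩ :=
      exists_isHamiltonianCycle_of_adj_adj_adj hV hG h₁ hbc' h₂ hac had hbd
    exact ⟨v, p, hp, Walk.infix_support_iff_mem_edges.1 (.inl hab),
      Walk.infix_support_iff_mem_edges.1 (.inl hcd)⟩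
  · have hbd' : G.Adj b d := adj_of_not_adj hG hbc hbc' hbd h₂.ne
    obtain ⟨v, p, hp, hab, hdc⟩ :=
      exists_isHamiltonianCycle_of_adj_adj_adj hV hG h₁ hbd' h₂.symm had hac hbc
    exact ⟨v, p, hp, Walk.infix_support_iff_mem_edges.1 (.inl hab),
      Walk.infix_support_iff_mem_edges.1 (.inr hdc)⟩

end

end SimpleGraph

theorem stmt_14_general (p : ℕ) (hp : 6 ≤ p) (M : Set (Sym2 (Fin p)))
    (hdisj : ∀ e ∈ M, ∀ f ∈ M, e ≠ f → ∀ x : Fin p, x ∈ e → x ∉ f)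
    (e₁ e₂ : Sym2 (Fin p))
    (h1 : e₁ ∈ ((⊤ : SimpleGraph (Fin p)) \ SimpleGraph.fromEdgeSet M).edgeSet)
    (h2 : e₂ ∈ ((⊤ : SimpleGraph (Fin p)) \ SimpleGraph.fromEdgeSet M).edgeSet)
    (hne : e₁ ≠ e₂) :
    ∃ (v : Fin p) (c : ((⊤ : SimpleGraph (Fin p)) \ SimpleGraph.fromEdgeSet M).Walk v v),
      c.IsHamiltonianCycle ∧ e₁ ∈ c.edges ∧ e₂ ∈ c.edges := by
  refine SimpleGraph.exists_isHamiltonianCycle_mem_edges (by simpa using hp) (fun v => ?_)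
    h1 h2 hne
  rw [top_sdiff, compl_compl]
  exact SimpleGraph.fromEdgeSet_neighborSet_subsingleton hdisj v

/-- Let `p ≥ 6` and let `M` be a matching in `K_p` (a set of pairwise disjoint
non-loop edges).  Then any two distinct edges of `K_p - M` lie on a common
hamiltonian cycle of `K_p - M`. -/
theorem stmt_14 (p : ℕ) (hp : 6 ≤ p) (M : Set (Sym2 (Fin p)))
    (hM : ∀ e ∈ M, ¬ e.IsDiag)
    (hdisj : ∀ e ∈ M, ∀ f ∈ M, e ≠ f → ∀ x : Fin p, x ∈ e → x ∉ f)
    (e₁ e₂ : Sym2 (Fin p))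
    (h1 : e₁ ∈ ((⊤ : SimpleGraph (Fin p)) \ SimpleGraph.fromEdgeSet M).edgeSet)
    (h2 : e₂ ∈ ((⊤ : SimpleGraph (Fin p)) \ SimpleGraph.fromEdgeSet M).edgeSet)
    (hne : e₁ ≠ e₂) :
    ∃ (v : Fin p) (c : ((⊤ : SimpleGraph (Fin p)) \ SimpleGraph.fromEdgeSet M).Walk v v),
      c.IsHamiltonianCycle ∧ e₁ ∈ c.edges ∧ e₂ ∈ c.edges :=
  stmt_14_general p hp M hdisj e₁ e₂ h1 h2 hne
end

section
/- Let n ≥ 3, k < n, and let G be an n-vertex graph such that d(u) + d(v) ≥ n + k for every pair of nonadjacent distinct vertices u, v. Then for every linear forest F with k edges contained in G, G has a Hamiltonian cycle containing all edges of F. -/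
/-!
Pósa's theorem by the Bondy–Chvátal closure argument, carrying the linear forest `F` along.
Induct downwards on `G`. If `G` is complete, list the vertices so that every path of `F` is a
segment of the list (possible because `F` is a linear forest) and close the list up into a
cycle. Otherwise add a missing edge `xy`; by induction `G + xy` has a Hamiltonian cycle through
`F`. If that cycle avoids `xy` it lies in `G`; if not, deleting `xy` leaves a Hamiltonian path
`x = p₀, …, p_{n-1} = y` of `G` through `F`. At least `d(x) + d(y) - (n - 1) ≥ k + 1` indices
`i` have `x ~ p_{i+1}` and `p_i ~ y`, so for one of them `p_i p_{i+1}` is not an edge of `F`,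
and exchanging it for the two edges `x p_{i+1}` and `p_i y` gives the required cycle.
-/

/-- A linear forest: a graph all of whose components are paths, i.e. every
vertex has at most two neighbors and there are no cycles. -/
def IsLinearForest {V : Type*} (F : SimpleGraph V) : Prop :=
  (∀ v : V, (F.neighborSet v).ncard ≤ 2) ∧
    ∀ (v : V) (w : F.Walk v v), ¬ w.IsCycle

namespace List

variable {α : Type*} {l P Q : List α} {a b c d : α}

lemma Nodup.not_pair_infix_of_pair_infix (hl : l.Nodup) (hab : [a, b] <:+: l) :
    ¬ [b, a] <:+: l := by
  intro hba
  obtain ⟨s, t, rfl⟩ := hab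
  have h := hba.sublist
  simp only [append_assoc, cons_append, nil_append] at h hl
  rw [nodup_append, nodup_cons, nodup_cons] at hl
  obtain ⟨-, ⟨hat, hbt, -⟩, hdisj⟩ := hl
  obtain ⟨_ | ⟨x, l₁⟩, l₂, hl, h₁, h₂⟩ := sublist_append_iff.mp h
  · simp only [nil_append] at hl
    subst hl
    simp only [sublist_cons_iff] at h₂
    grind
  · simp only [cons_append, cons.injEq] at hl
    have := h₁.subset mem_cons_self
    grind

lemma pair_infix_erase [DecidableEq α] (h : [a, b] <:+: l) (ha : a ≠ c) (hb : b ≠ c) :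
    [a, b] <:+: l.erase c := by
  obtain ⟨s, t, rfl⟩ := h
  by_cases hc : c ∈ s
  · rw [append_assoc, erase_append_left _ hc]
    exact infix_append' _ _ _
  · rw [append_assoc, erase_append_right _ hc, cons_append, cons_append, nil_append,
      erase_cons_tail (by simpa using ha), erase_cons_tail (by simpa using hb)]
    exact infix_append' _ _ _

lemma pair_infix_append_cons_cons (h : [a, b] <:+: P ++ c :: Q) (ha : a ≠ c) :
    [a, b] <:+: P ++ c :: d :: Q := by
  rw [show P ++ c :: Q = (P ++ [c]) ++ Q by simp] at h
  rw [show P ++ c :: d :: Q = (P ++ [c]) ++ d :: Q by simp]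
  rcases infix_append_iff_ne_nil.mp h with h | h | ⟨l₁, l₂, h₁, h₂, h, hs, -⟩
  · exact infix_append_of_infix_left h
  · exact infix_append_of_infix_right (infix_cons h)
  · rcases l₁ with _ | ⟨x, _ | ⟨x', l₁⟩⟩
    · exact absurd rfl h₁
    · simp only [cons_append, nil_append, cons.injEq] at h
      rw [← h.1] at hs
      exact absurd (by simpa using hs) ha
    · simp only [cons_append, cons.injEq, nil_eq, append_eq_nil_iff] at h
      exact absurd h.2.2.2 h₂

end List

namespace SimpleGraph

variable {V : Type*} {G F H : SimpleGraph V} {u v x y : V}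

def ConsecutiveIn (F : SimpleGraph V) (l : List V) : Prop :=
  ∀ ⦃a b⦄, F.Adj a b → [a, b] <:+: l ∨ [b, a] <:+: l

lemma ConsecutiveIn.reverse {l : List V} (h : F.ConsecutiveIn l) : F.ConsecutiveIn l.reverse :=
  fun _ _ hab => (h hab).symm.imp (by simpa using ·.reverse) (by simpa using ·.reverse)

lemma ConsecutiveIn.erase [DecidableEq V] {l : List V} (h : F.ConsecutiveIn l)
    (hu : ∀ w, ¬ F.Adj u w) : F.ConsecutiveIn (l.erase u) := by
  intro a b hab
  have ha : a ≠ u := by rintro rfl; exact hu b hab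
  have hb : b ≠ u := by rintro rfl; exact hu a hab.symm
  exact (h hab).imp (List.pair_infix_erase · ha hb) (List.pair_infix_erase · hb ha)

lemma ConsecutiveIn.exists_perm_forall_pair_infix_not_adj {l : List V} (h : F.ConsecutiveIn l)
    (hl : l.Nodup) (hv : ∀ c d, F.Adj v c → F.Adj v d → c = d) :
    ∃ l', l'.Perm l ∧ F.ConsecutiveIn l' ∧ ∀ c, [v, c] <:+: l' → ¬ F.Adj v c := by
  by_cases hc : ∃ c, [v, c] <:+: l ∧ F.Adj v c
  · obtain ⟨c, hvc, hc⟩ := hc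
    refine ⟨l.reverse, List.reverse_perm l, h.reverse, fun d hvd hd => ?_⟩
    obtain rfl := hv d c hd hc
    exact hl.not_pair_infix_of_pair_infix hvc (by simpa using hvd.reverse)
  · exact ⟨l, List.Perm.refl l, h, fun c hvc hvc' => hc ⟨c, hvc, hvc'⟩⟩

lemma ConsecutiveIn.exists_perm_pair_infix [DecidableEq V] {l : List V} (h : F.ConsecutiveIn l)
    (hl : l.Nodup) (hul : u ∈ l) (hvl : v ∈ l) (huv : u ≠ v) (hu : ∀ w, ¬ F.Adj u w)
    (hv : ∀ c d, F.Adj v c → F.Adj v d → c = d) :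
    ∃ l', l'.Perm l ∧ F.ConsecutiveIn l' ∧ [v, u] <:+: l' := by
  -- move `u` right after `v`, reversing first if the neighbour of `v` follows `v`
  obtain ⟨l₁, hperm, hF₁, hv₁⟩ :=
    (h.erase hu).exists_perm_forall_pair_infix_not_adj (hl.erase u) hv
  obtain ⟨P, Q, rfl⟩ :=
    List.append_of_mem (hperm.mem_iff.mpr ((List.mem_erase_of_ne huv.symm).mpr hvl))
  refine ⟨P ++ v :: u :: Q, ?_, fun a b hab => ?_, ⟨P, Q, by simp⟩⟩
  · have hmid : (P ++ v :: u :: Q).Perm (u :: (P ++ v :: Q)) := by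
      simpa using List.perm_middle (l₁ := P ++ [v]) (a := u) (l₂ := Q)
    exact hmid.trans ((hperm.cons u).trans (List.perm_cons_erase hul).symm)
  · have hne {a b} (hab : F.Adj a b) (h : [a, b] <:+: P ++ v :: Q) : a ≠ v := by
      rintro rfl
      exact hv₁ b h hab
    exact (hF₁ hab).imp (fun h => List.pair_infix_append_cons_cons h (hne hab h))
      (fun h => List.pair_infix_append_cons_cons h (hne hab.symm h))

lemma IsAcyclic.exists_adj_forall_adj_eq [Finite V] (hF : F.IsAcyclic) {a b : V}
    (hab : F.Adj a b) : ∃ u v, F.Adj u v ∧ ∀ w, F.Adj u w → w = v := by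
  have : Nonempty V := ⟨a⟩
  obtain ⟨u, v, p, hp, hmax⟩ := Walk.exists_isPath_forall_isPath_length_le_length F
  have hnil : ¬ p.Nil := by
    rw [← Walk.length_eq_zero_iff]
    have := hmax a b (hab.toWalk) (Walk.IsPath.mk' (by simp [hab.ne]))
    simp only [Adj.toWalk, Walk.length_cons, Walk.length_nil, zero_add] at this
    omega
  refine ⟨u, p.snd, p.adj_snd hnil, fun w hw => hF.eq_snd_of_adj_start hp hw ?_⟩
  by_contra hwp
  have := hmax w v (p.cons hw.symm) (hp.cons hwp)
  simp at this

lemma _root_.IsLinearForest.isAcyclic (hF : IsLinearForest F) : F.IsAcyclic := hF.2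

lemma _root_.IsLinearForest.anti [Finite V] (hF : IsLinearForest F) (h : H ≤ F) :
    IsLinearForest H :=
  ⟨fun v => (Set.ncard_le_ncard (fun _ hw => h hw) (Set.toFinite _)).trans (hF.1 v),
    hF.isAcyclic.anti h⟩

lemma _root_.IsLinearForest.eq_of_adj_of_adj [Finite V] (hF : IsLinearForest F) {c d : V}
    (hu : F.Adj v u) (hc : F.Adj v c) (hd : F.Adj v d) (hcu : c ≠ u) (hdu : d ≠ u) : c = d := by
  by_contra hcd
  have h3 : ({u, c, d} : Set V).ncard = 3 :=
    Set.ncard_eq_three.mpr ⟨u, c, d, hcu.symm, hdu.symm, hcd, rfl⟩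
  have hsub : ({u, c, d} : Set V) ⊆ F.neighborSet v := by
    rintro w (rfl | rfl | rfl)
    exacts [hu, hc, hd]
  have := (Set.ncard_le_ncard hsub (Set.toFinite _)).trans (hF.1 v)
  omega

theorem _root_.IsLinearForest.exists_consecutiveIn [Fintype V] [DecidableEq V]
    (hF : IsLinearForest F) :
    ∃ l : List V, l.Nodup ∧ (∀ v, v ∈ l) ∧ F.ConsecutiveIn l := by
  induction F using WellFoundedLT.induction with
  | _ F ih =>
  by_cases hbot : ∃ a b, F.Adj a b
  swap
  · exact ⟨Finset.univ.toList, Finset.nodup_toList _, by simp,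
      fun a b hab => absurd ⟨a, b, hab⟩ hbot⟩
  obtain ⟨a, b, hab⟩ := hbot
  obtain ⟨u, v, huv, hu⟩ := hF.isAcyclic.exists_adj_forall_adj_eq hab
  set H := F \ edge u v
  have huv' : (edge u v).Adj u v := (edge_adj u v u v).mpr ⟨Or.inl ⟨rfl, rfl⟩, huv.ne⟩
  have hH : H < F := sdiff_lt ((edge_le_iff F).mpr (Or.inr huv)) fun h => by simp [h] at huv'
  obtain ⟨l, hl, hmem, hHl⟩ := ih H hH (hF.anti hH.le)
  have hHu : ∀ w, ¬ H.Adj u w := by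
    intro w hw
    rw [sdiff_adj] at hw
    obtain rfl := hu w hw.1
    exact hw.2 huv'
  have hHv : ∀ c d, H.Adj v c → H.Adj v d → c = d := fun c d hc hd =>
    hF.eq_of_adj_of_adj huv.symm hc.1 hd.1 (by rintro rfl; exact hHu v hc.symm)
      (by rintro rfl; exact hHu v hd.symm)
  obtain ⟨l', hperm, hHl', hvu⟩ :=
    hHl.exists_perm_pair_infix hl (hmem u) (hmem v) huv.ne hHu hHv
  refine ⟨l', hperm.nodup_iff.mpr hl, fun w => hperm.mem_iff.mpr (hmem w), fun a b hab => ?_⟩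
  by_cases he : (edge u v).Adj a b
  · rcases (edge_adj u v a b).mp he with ⟨⟨rfl, rfl⟩ | ⟨rfl, rfl⟩, -⟩
    exacts [Or.inr hvu, Or.inl hvu]
  · exact hHl' ((sdiff_adj _ _ a b).mpr ⟨hab, he⟩)

def HasHamiltonianCycleThrough (G F : SimpleGraph V) [DecidableEq V] : Prop :=
  ∃ (v : V) (c : G.Walk v v), c.IsHamiltonianCycle ∧ ∀ e ∈ F.edgeSet, e ∈ c.edges

namespace Walk

lemma IsPath.injOn_edge_getVert {p : G.Walk u v} (hp : p.IsPath) :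
    Set.InjOn (fun i => s(p.getVert i, p.getVert (i + 1))) {i | i < p.length} := by
  intro i hi j hj hij
  simp only [Set.mem_ofPred_eq] at hi hj
  have hinj {a b} (ha : a ≤ p.length) (hb : b ≤ p.length) (h : p.getVert a = p.getVert b) :
      a = b := hp.getVert_injOn ha hb h
  rcases Sym2.eq_iff.mp hij with ⟨h1, -⟩ | ⟨h1, h2⟩
  · exact hinj hi.le hj.le h1
  · have := hinj hi.le hj h1
    have := hinj hi hj.le h2
    omega

lemma mem_edgeSet_of_mem_edges_of_ne {p : (G ⊔ edge x y).Walk u v} {e : Sym2 V}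
    (he : e ∈ p.edges) (hne : e ≠ s(x, y)) : e ∈ G.edgeSet := by
  have := p.edges_subset_edgeSet he
  simp only [edgeSet_sup, edgeSet_edge, Set.mem_union, Set.mem_sdiff,
    Set.mem_singleton_iff] at this
  tauto

section

variable [DecidableEq V]

lemma IsHamiltonian.exists_getVert_eq {p : G.Walk u v} (hp : p.IsHamiltonian) (w : V) :
    ∃ i ≤ p.length, p.getVert i = w := by
  obtain ⟨i, hi, hle⟩ := mem_support_iff_exists_getVert.mp (hp.mem_support w)
  exact ⟨i, hle, hi⟩

lemma IsHamiltonianCycle.exists_isHamiltonian_of_snd_eq {c : G.Walk x x}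
    (hc : c.IsHamiltonianCycle) (hy : c.snd = y) :
    ∃ p : G.Walk y x, p.IsHamiltonian ∧ (s(x, y) :: p.edges).Perm c.edges := by
  subst hy
  refine ⟨c.tail, hc.isHamiltonian_tail, ?_⟩
  rw [← edges_cons (c.adj_snd hc.not_nil), cons_tail_eq _ hc.not_nil]

variable [Fintype V]

lemma IsHamiltonianCycle.exists_isHamiltonian_of_mem_edges {c : G.Walk u u}
    (hc : c.IsHamiltonianCycle) (h : s(x, y) ∈ c.edges) :
    ∃ p : G.Walk y x, p.IsHamiltonian ∧ (s(x, y) :: p.edges).Perm c.edges := by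
  have hx : x ∈ c.support := c.fst_mem_support_of_mem_edges h
  set d := c.rotate x hx
  have hd : d.IsHamiltonianCycle := (isHamiltonianCycle_rotate hx).mpr hc
  have hdc : d.edges.Perm c.edges := (rotate_edges c x hx).perm
  have hy : y ∈ d.toSubgraph.neighborSet x := by
    rw [Subgraph.mem_neighborSet, adj_toSubgraph_iff_mem_edges, hdc.mem_iff]
    exact h
  rw [hd.isCycle.neighborSet_toSubgraph_endpoint] at hy
  rcases hy with hy | hy
  · obtain ⟨p, hp, hpd⟩ := hd.exists_isHamiltonian_of_snd_eq hy.symm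
    exact ⟨p, hp, hpd.trans hdc⟩
  · have hdr : d.reverse.IsHamiltonianCycle := isHamiltonianCycle_iff_isCycle_and_length_eq.mpr
      ⟨hd.isCycle.reverse, (length_reverse d).trans hd.length_eq⟩
    obtain ⟨p, hp, hpd⟩ := hdr.exists_isHamiltonian_of_snd_eq ((snd_reverse d).trans hy.symm)
    rw [edges_reverse] at hpd
    exact ⟨p, hp, (hpd.trans (List.reverse_perm _)).trans hdc⟩

lemma IsHamiltonian.hasHamiltonianCycleThrough_cons {p : G.Walk u v} (hp : p.IsHamiltonian)
    (h : G.Adj v u) (hV : 3 ≤ Fintype.card V) (hF : ∀ e ∈ F.edgeSet, e ∈ p.edges) :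
    G.HasHamiltonianCycleThrough F := by
  refine ⟨v, cons h p, ?_, fun e he => List.mem_cons_of_mem _ (hF e he)⟩
  have htail : (cons h p).tail.IsHamiltonian := fun a => by simpa using hp a
  refine isHamiltonianCycle_isCycle_and_isHamiltonian_tail.mpr
    ⟨isCycle_iff_isPath_tail_and_le_length.mpr ⟨htail.isPath, ?_⟩, htail⟩
  rw [length_cons, hp.length_eq]
  omega

lemma IsHamiltonian.hasHamiltonianCycleThrough_of_crossing {p : G.Walk x y}
    (hp : p.IsHamiltonian) (hV : 3 ≤ Fintype.card V) (hF : ∀ e ∈ F.edgeSet, e ∈ p.edges)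
    {j : ℕ} (hj : j < p.length) (hx : G.Adj x (p.getVert (j + 1))) (hy : G.Adj (p.getVert j) y)
    (hjF : s(p.getVert j, p.getVert (j + 1)) ∉ F.edgeSet) :
    G.HasHamiltonianCycleThrough F := by
  -- `q` runs `y → ⋯ → p_{j+1} → x → ⋯ → p_j`, and `p_j y` closes it up
  set q := (p.drop (j + 1)).reverse.append (cons hx.symm (p.take j))
  have hsupport : q.support.Perm p.support := by
    simp only [q, support_append, support_reverse, support_cons, List.tail_cons, support_take,
      drop_support_eq_support_drop_min, Nat.min_eq_left hj]
    refine List.perm_append_comm.trans (((List.reverse_perm _).append_left _).trans ?_)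
    rw [List.take_append_drop]
  refine IsHamiltonian.hasHamiltonianCycleThrough_cons (p := q)
    (fun a => (hsupport.count_eq a).trans (hp a)) hy hV fun e he => ?_
  have hedges : p.edges = p.edges.take j ++ s(p.getVert j, p.getVert (j + 1)) ::
      p.edges.drop (j + 1) := by
    rw [← getElem_edges (by simpa using hj), List.getElem_cons_drop, List.take_append_drop]
  have hep := hF e he
  rw [hedges] at hep
  simp only [q, edges_append, edges_reverse, edges_cons, edges_take, edges_drop, List.mem_append,
    List.mem_reverse, List.mem_cons, List.mem_cons] at hep ⊢
  rcases hep with h | rfl | h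
  · exact Or.inr (Or.inr h)
  · exact absurd he hjF
  · exact Or.inl h

variable [DecidableRel G.Adj]

lemma IsHamiltonian.card_filter_adj_getVert {p : G.Walk x y} (hp : p.IsHamiltonian) :
    ((Finset.range p.length).filter (fun i => G.Adj (p.getVert i) y)).card = G.degree y := by
  rw [← card_neighborFinset_eq_degree]
  refine Finset.card_bij (fun i _ => p.getVert i) ?_ ?_ ?_
  · intro i hi
    simpa [mem_neighborFinset, adj_comm] using (Finset.mem_filter.mp hi).2
  · intro i hi j hj h
    simp only [Finset.mem_filter, Finset.mem_range] at hi hj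
    exact hp.isPath.getVert_injOn hi.1.le hj.1.le h
  · intro w hw
    obtain ⟨i, hi, rfl⟩ := hp.exists_getVert_eq w
    have hne : i ≠ p.length := by
      rintro rfl
      simp at hw
    exact ⟨i, by simpa [Finset.mem_filter, (mem_neighborFinset _ _ _).mp hw |>.symm] using
      lt_of_le_of_ne hi hne, rfl⟩

lemma IsHamiltonian.card_filter_adj_getVert_succ {p : G.Walk x y} (hp : p.IsHamiltonian) :
    ((Finset.range p.length).filter (fun i => G.Adj x (p.getVert (i + 1)))).card = G.degree x := by
  rw [← card_neighborFinset_eq_degree]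
  refine Finset.card_bij (fun i _ => p.getVert (i + 1)) ?_ ?_ ?_
  · intro i hi
    simpa [mem_neighborFinset] using (Finset.mem_filter.mp hi).2
  · intro i hi j hj h
    simp only [Finset.mem_filter, Finset.mem_range] at hi hj
    simpa using hp.isPath.getVert_injOn (by simpa using hi.1) (by simpa using hj.1) h
  · intro w hw
    obtain ⟨i, hi, rfl⟩ := hp.exists_getVert_eq w
    obtain ⟨i, rfl⟩ : ∃ i', i = i' + 1 := by
      refine Nat.exists_eq_add_one.mpr (Nat.pos_of_ne_zero ?_)
      rintro rfl
      simp at hw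
    exact ⟨i, by simpa [Finset.mem_filter, (mem_neighborFinset _ _ _).mp hw] using hi, rfl⟩

lemma IsHamiltonian.exists_crossing {p : G.Walk x y} (hp : p.IsHamiltonian)
    (hdeg : Fintype.card V + F.edgeSet.ncard ≤ G.degree x + G.degree y) :
    ∃ j < p.length, G.Adj x (p.getVert (j + 1)) ∧ G.Adj (p.getVert j) y ∧
      s(p.getVert j, p.getVert (j + 1)) ∉ F.edgeSet := by
  set A := (Finset.range p.length).filter (fun i => G.Adj x (p.getVert (i + 1)))
  set B := (Finset.range p.length).filter (fun i => G.Adj (p.getVert i) y)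
  have hunion : (A ∪ B).card ≤ p.length :=
    (Finset.card_le_card (Finset.union_subset (Finset.filter_subset _ _)
      (Finset.filter_subset _ _))).trans (Finset.card_range _).le
  have hinter : F.edgeSet.ncard < (A ∩ B).card := by
    have hsum := Finset.card_union_add_card_inter A B
    have hA : A.card = G.degree x := hp.card_filter_adj_getVert_succ
    have hB : B.card = G.degree y := hp.card_filter_adj_getVert
    have hlen := hp.length_eq
    have hpos : 0 < Fintype.card V := Fintype.card_pos_iff.mpr ⟨x⟩
    omega
  -- the edges `p_i p_{i+1}` with `i ∈ A ∩ B` are distinct, so they cannot all lie in `F`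
  by_contra! hall
  refine hinter.not_ge ?_
  rw [← Finset.card_image_of_injOn (hp.isPath.injOn_edge_getVert.mono ?_),
    ← Set.ncard_coe_finset]
  · refine Set.ncard_le_ncard ?_ F.edgeSet.toFinite
    intro e he
    simp only [Finset.coe_image, Set.mem_image, Finset.mem_coe, Finset.mem_inter, A, B,
      Finset.mem_filter, Finset.mem_range] at he
    obtain ⟨i, ⟨⟨hi, hxi⟩, -, hiy⟩, rfl⟩ := he
    exact hall i hi hxi hiy
  · intro i hi
    simp only [Finset.coe_inter, Set.mem_inter_iff, Finset.mem_coe, A, Finset.mem_filter,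
      Finset.mem_range] at hi
    exact hi.1.1

theorem IsHamiltonian.hasHamiltonianCycleThrough {p : G.Walk x y} (hp : p.IsHamiltonian)
    (hV : 3 ≤ Fintype.card V) (hF : ∀ e ∈ F.edgeSet, e ∈ p.edges)
    (hdeg : Fintype.card V + F.edgeSet.ncard ≤ G.degree x + G.degree y) :
    G.HasHamiltonianCycleThrough F :=
  have ⟨_, hj, hx, hy, hjF⟩ := hp.exists_crossing hdeg
  hp.hasHamiltonianCycleThrough_of_crossing hV hF hj hx hy hjF

end

end Walk

open Walk in
theorem HasHamiltonianCycleThrough.of_sup_edge [Fintype V] [DecidableEq V] [DecidableRel G.Adj]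
    (hFG : F ≤ G) (hxy : ¬ G.Adj x y) (hV : 3 ≤ Fintype.card V)
    (hdeg : Fintype.card V + F.edgeSet.ncard ≤ G.degree x + G.degree y)
    (h : (G ⊔ edge x y).HasHamiltonianCycleThrough F) : G.HasHamiltonianCycleThrough F := by
  obtain ⟨u, c, hc, hcF⟩ := h
  have hFxy : ∀ e ∈ F.edgeSet, e ≠ s(x, y) := by
    rintro e he rfl
    exact hxy (hFG he)
  by_cases hxyc : s(x, y) ∈ c.edges
  · obtain ⟨p, hp, hpc⟩ := hc.exists_isHamiltonian_of_mem_edges hxyc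
    have hxyp : s(x, y) ∉ p.edges :=
      (List.nodup_cons.mp (hpc.nodup_iff.mpr hc.isCycle.edges_nodup)).1
    have hpG : ∀ e ∈ p.edges, e ∈ G.edgeSet := fun e he =>
      mem_edgeSet_of_mem_edges_of_ne he (ne_of_mem_of_not_mem he hxyp)
    refine IsHamiltonian.hasHamiltonianCycleThrough (p := p.transfer G hpG)
      (fun a => by simpa [support_transfer] using hp a) hV (fun e he => ?_) (by omega)
    rw [edges_transfer]
    exact (List.mem_cons.mp (hpc.mem_iff.mpr (hcF e he))).resolve_left (hFxy e he)
  · have hcG : ∀ e ∈ c.edges, e ∈ G.edgeSet := fun e he =>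
      mem_edgeSet_of_mem_edges_of_ne he (ne_of_mem_of_not_mem he hxyc)
    refine ⟨u, c.transfer G hcG, ?_, by simpa [edges_transfer] using hcF⟩
    exact isHamiltonianCycle_iff_isCycle_and_length_eq.mpr
      ⟨hc.isCycle.transfer hcG, (length_transfer _ _).trans hc.length_eq⟩

open Walk in
theorem hasHamiltonianCycleThrough_of_forall_adj [Fintype V] [DecidableEq V]
    (hF : IsLinearForest F) (hV : 3 ≤ Fintype.card V) (hG : ∀ u v, u ≠ v → G.Adj u v) :
    G.HasHamiltonianCycleThrough F := by
  obtain ⟨l, hl, hmem, hFl⟩ := hF.exists_consecutiveIn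
  have : Nonempty V := Fintype.card_pos_iff.mp (by omega)
  have hne : l ≠ [] := List.ne_nil_of_mem (hmem (Classical.arbitrary V))
  have hchain : l.IsChain G.Adj := (hl.imp (hG _ _)).isChain
  have hp : (ofSupport l hne hchain).IsHamiltonian := fun a => by
    rw [support_ofSupport]
    exact List.count_eq_one_of_mem hl (hmem a)
  refine hp.hasHamiltonianCycleThrough_cons (hG _ _ fun h => ?_) hV fun e he => ?_
  · have := hp.isPath.nil_iff_eq.mpr h.symm
    rw [← length_eq_zero_iff, hp.length_eq] at this
    omega
  · induction e using Sym2.ind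
    exact infix_support_iff_mem_edges.mp (by simpa [support_ofSupport] using hFl he)

theorem _root_.IsLinearForest.hasHamiltonianCycleThrough [Fintype V] [DecidableEq V]
    (hF : IsLinearForest F) (hV : 3 ≤ Fintype.card V) (G : SimpleGraph V) [DecidableRel G.Adj]
    (hFG : F ≤ G) (hdeg : ∀ u v, u ≠ v → ¬ G.Adj u v →
      Fintype.card V + F.edgeSet.ncard ≤ G.degree u + G.degree v) :
    G.HasHamiltonianCycleThrough F := by
  revert hFG hdeg
  revert ‹DecidableRel G.Adj›
  induction G using WellFoundedGT.induction with
  | _ G ih =>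
  intro _ hFG hdeg
  by_cases hG : ∃ x y, x ≠ y ∧ ¬ G.Adj x y
  swap
  · exact hasHamiltonianCycleThrough_of_forall_adj hF hV fun u v huv =>
      by_contra fun h => hG ⟨u, v, huv, h⟩
  obtain ⟨x, y, hne, hxy⟩ := hG
  refine .of_sup_edge hFG hxy hV (hdeg x y hne hxy)
    (ih _ (lt_sup_edge _ _ _ hne hxy) (hFG.trans le_sup_left) ?_)
  intro u v huv h
  have := hdeg u v huv fun h' => h (le_sup_left (b := edge x y) h')
  have := degree_le_of_le (v := u) (le_sup_left (a := G) (b := edge x y))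
  have := degree_le_of_le (v := v) (le_sup_left (a := G) (b := edge x y))
  omega

end SimpleGraph

theorem stmt_15_general {V : Type*} [Fintype V] [DecidableEq V] (G : SimpleGraph V)
    [DecidableRel G.Adj] (n k : ℕ) (hn : Fintype.card V = n) (hn3 : 3 ≤ n)
    (hdeg : ∀ u v : V, u ≠ v → ¬ G.Adj u v → n + k ≤ G.degree u + G.degree v)
    (F : SimpleGraph V) (hFG : F ≤ G) (hF : IsLinearForest F)
    (hFk : F.edgeSet.ncard = k) :
    ∃ (v : V) (c : G.Walk v v), c.IsHamiltonianCycle ∧ ∀ e ∈ F.edgeSet, e ∈ c.edges := by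
  subst hn hFk
  exact hF.hasHamiltonianCycleThrough hn3 G hFG hdeg

/-- Pósa: let `n ≥ 3`, `k < n`, and let `G` be an `n`-vertex graph with
`d(u) + d(v) ≥ n + k` for every pair of nonadjacent distinct vertices.  Then for
every linear forest `F ⊆ G` with `k` edges, `G` has a hamiltonian cycle
containing all edges of `F`. -/
theorem stmt_15 {V : Type*} [Fintype V] [DecidableEq V] (G : SimpleGraph V)
    [DecidableRel G.Adj] (n k : ℕ) (hn : Fintype.card V = n) (hn3 : 3 ≤ n)
    (hk : k < n)
    (hdeg : ∀ u v : V, u ≠ v → ¬ G.Adj u v → n + k ≤ G.degree u + G.degree v)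
    (F : SimpleGraph V) (hFG : F ≤ G) (hF : IsLinearForest F)
    (hFk : F.edgeSet.ncard = k) :
    ∃ (v : V) (c : G.Walk v v), c.IsHamiltonianCycle ∧ ∀ e ∈ F.edgeSet, e ∈ c.edges :=
  stmt_15_general G n k hn hn3 hdeg F hFG hF hFk
end

section
/- Let t ≥ 2 and let H be a subgraph of the complete bipartite graph K_{t,t+1} with parts A (|A| = t) and B (|B| = t+1) obtained by deleting at most t - 2 edges. Then any two distinct vertices b₁, b₂ ∈ B are joined in H by a path of length 2t, any a ∈ A and b ∈ B are joined by a path of length 2t - 1, and any two distinct a₁, a₂ ∈ A are joined by a path of length 2t - 2. -/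
/-!
All three claims reduce to the balanced case: if `|A| = |B| = n` and at most `n - 2` edges other
than `ab` are missing, then `a ∈ A` and `b ∈ B` are joined by a path through all of `A ∪ B`. For
`a` and `b`, delete another vertex of `B`; for `b₁` and `b₂`, delete `b₁` and prepend an edge from
`b₁`; for `a₁` and `a₂`, delete `a₂` and two vertices of `B` (one of them on a missing edge, if
there is one) and append an edge into `a₂`.

The balanced case goes by induction on `n ≥ 2`. Remove `x ∈ A \ {a}` and `y ∈ B \ {b}` with
`xy ∈ H`, chosen to cover a missing edge other than `ab` when `n - 2` of them are missing, and with
one of `x`, `y` adjacent to the whole opposite side. Then `x` and `y` can be put back into the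
shorter path by replacing one of its edges `uv` with `u y x v`. The edge `ab` is not counted since
no such path uses it; this keeps the induction free of exceptional cases.
-/

open Finset

namespace SimpleGraph

section Walk

variable {V : Type*} [DecidableEq V] {G : SimpleGraph V}

theorem Walk.IsPath.exists_splice {u v w₁ w₂ x y : V} {p : G.Walk u v} (hp : p.IsPath)
    (he : s(w₁, w₂) ∈ p.edges) (h₁ : G.Adj w₁ x) (h₂ : G.Adj x y) (h₃ : G.Adj y w₂)
    (hx : x ∉ p.support) (hy : y ∉ p.support) :
    ∃ q : G.Walk u v, q.IsPath ∧
      q.support.toFinset = insert x (insert y p.support.toFinset) := by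
  induction p with
  | nil => simp at he
  | @cons u w v h p ih =>
    rw [Walk.cons_isPath_iff] at hp
    simp only [Walk.support_cons, List.mem_cons, not_or] at hx hy
    simp only [Walk.edges_cons, List.mem_cons, Sym2.eq_iff] at he
    rcases he with (⟨rfl, rfl⟩ | ⟨rfl, rfl⟩) | he
    · refine ⟨.cons h₁ (.cons h₂ (.cons h₃ p)), ?_, ?_⟩
      · simp [Walk.cons_isPath_iff, hp.1, hp.2, hx.2, hy.2, h₂.ne, Ne.symm hx.1, Ne.symm hy.1]
      · ext; simp; tauto
    · refine ⟨.cons h₃.symm (.cons h₂.symm (.cons h₁.symm p)), ?_, ?_⟩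
      · simp [Walk.cons_isPath_iff, hp.1, hp.2, hx.2, hy.2, h₂.ne', Ne.symm hx.1, Ne.symm hy.1]
      · ext; simp; tauto
    · obtain ⟨q, hq, hqs⟩ := ih hp.1 he hx.2 hy.2
      have hu : u ∉ q.support := by
        rw [← List.mem_toFinset, hqs]; simp [Ne.symm hx.1, Ne.symm hy.1, hp.2]
      refine ⟨.cons h q, hq.cons hu, ?_⟩
      simp [hqs, Finset.insert_comm]

theorem Walk.IsPath.length_add_one {u v : V} {p : G.Walk u v} (hp : p.IsPath) :
    p.length + 1 = #p.support.toFinset := by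
  rw [List.toFinset_card_of_nodup hp.support_nodup, Walk.length_support]

end Walk

variable {α β : Type*} {H : SimpleGraph (α ⊕ β)} {A A' : Finset α} {B B' : Finset β} {a x : α}
  {b y : β}

open Classical in
noncomputable def missingPairs (H : SimpleGraph (α ⊕ β)) (A : Finset α) (B : Finset β) :
    Finset (α × β) :=
  (A ×ˢ B).filter fun p => ¬H.Adj (.inl p.1) (.inr p.2)

theorem mem_missingPairs :
    (x, y) ∈ H.missingPairs A B ↔ x ∈ A ∧ y ∈ B ∧ ¬H.Adj (.inl x) (.inr y) := by
  simp [missingPairs, and_assoc]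

theorem adj_of_notMem_missingPairs (hx : x ∈ A) (hy : y ∈ B) (h : (x, y) ∉ H.missingPairs A B) :
    H.Adj (.inl x) (.inr y) := by
  by_contra hxy
  exact h (mem_missingPairs.2 ⟨hx, hy, hxy⟩)

theorem missingPairs_mono (hA : A' ⊆ A) (hB : B' ⊆ B) :
    H.missingPairs A' B' ⊆ H.missingPairs A B := by
  rintro ⟨x, y⟩ hxy
  rw [mem_missingPairs] at hxy ⊢
  exact ⟨hA hxy.1, hB hxy.2.1, hxy.2.2⟩

theorem exists_forall_adj_inl [DecidableEq α] (h : #(H.missingPairs A B) < #A) :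
    ∃ x ∈ A, ∀ y ∈ B, H.Adj (.inl x) (.inr y) := by
  obtain ⟨x, hxA, hx⟩ : ∃ x ∈ A, x ∉ (H.missingPairs A B).image Prod.fst :=
    exists_mem_notMem_of_card_lt_card (card_image_le.trans_lt h)
  refine ⟨x, hxA, fun y hy => adj_of_notMem_missingPairs hxA hy fun hxy => hx ?_⟩
  exact mem_image_of_mem Prod.fst hxy

theorem exists_forall_adj_inr [DecidableEq β] (h : #(H.missingPairs A B) < #B) :
    ∃ y ∈ B, ∀ x ∈ A, H.Adj (.inl x) (.inr y) := by
  obtain ⟨y, hyB, hy⟩ : ∃ y ∈ B, y ∉ (H.missingPairs A B).image Prod.snd :=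
    exists_mem_notMem_of_card_lt_card (card_image_le.trans_lt h)
  refine ⟨y, hyB, fun x hx => adj_of_notMem_missingPairs hx hyB fun hxy => hy ?_⟩
  exact mem_image_of_mem Prod.snd hxy

theorem ncard_edgeSet_add_card_missingPairs [Fintype α] [Fintype β]
    (hH : H ≤ completeBipartiteGraph α β) :
    H.edgeSet.ncard + #(H.missingPairs univ univ) = Fintype.card α * Fintype.card β := by
  classical
  have hinj : Function.Injective fun p : α × β => s(Sum.inl p.1, Sum.inr p.2) := by
    grind [Function.Injective]
  have hedges : H.edgeSet = (fun p : α × β => s(Sum.inl p.1, Sum.inr p.2)) ''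
      ↑((univ ×ˢ univ).filter fun p : α × β => H.Adj (.inl p.1) (.inr p.2)) := by
    refine Set.ext <| Sym2.ind fun u v => ?_
    have := @hH u v
    cases u <;> cases v <;> simp_all [adj_comm]
  rw [hedges, Set.ncard_image_of_injective _ hinj, Set.ncard_coe_finset, missingPairs,
    card_filter_add_card_filter_not, card_product, card_univ, card_univ]

theorem Walk.exists_mem_edges_of_inl_mem_support (hH : H ≤ completeBipartiteGraph α β)
    {u v : α ⊕ β} {p : H.Walk u v} (hp : ¬p.Nil) (hx : .inl x ∈ p.support) :
    ∃ y, s(.inl x, .inr y) ∈ p.edges := by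
  obtain ⟨e, he, hxe⟩ := (Walk.mem_support_iff_exists_mem_edges_of_not_nil hp).1 hx
  obtain ⟨z, rfl⟩ := Sym2.mem_iff_exists.1 hxe
  have := hH (p.adj_of_mem_edges he)
  cases z with
  | inl => simp at this
  | inr y => exact ⟨y, he⟩

theorem Walk.exists_mem_edges_of_inr_mem_support (hH : H ≤ completeBipartiteGraph α β)
    {u v : α ⊕ β} {p : H.Walk u v} (hp : ¬p.Nil) (hy : .inr y ∈ p.support) :
    ∃ x, s(.inl x, .inr y) ∈ p.edges := by
  obtain ⟨e, he, hye⟩ := (Walk.mem_support_iff_exists_mem_edges_of_not_nil hp).1 hy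
  obtain ⟨z, rfl⟩ := Sym2.mem_iff_exists.1 hye
  have := hH (p.adj_of_mem_edges he)
  cases z with
  | inl x => exact ⟨x, Sym2.eq_swap ▸ he⟩
  | inr => simp at this

/-- `- 1` truncates: when no pair is missing, any `y` will do. -/
theorem exists_card_missingPairs_erase_le [DecidableEq β] (hB : B.Nonempty) :
    ∃ y ∈ B, #(H.missingPairs A (B.erase y)) ≤ #(H.missingPairs A B) - 1 := by
  rcases (H.missingPairs A B).eq_empty_or_nonempty with hM | ⟨⟨x, y⟩, hq⟩
  · obtain ⟨y, hy⟩ := hB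
    refine ⟨y, hy, ?_⟩
    simpa [hM] using card_le_card (missingPairs_mono (H := H) (subset_refl A) (erase_subset y B))
  · refine ⟨y, (mem_missingPairs.1 hq).2.1, Nat.le_sub_one_of_lt (card_lt_card
      ⟨missingPairs_mono subset_rfl (erase_subset _ _), fun h => ?_⟩)⟩
    simpa [mem_missingPairs] using h hq

variable [DecidableEq α] [DecidableEq β]

theorem missingPairs_subset_erase (hA : A' ⊆ A) (hB : B' ⊆ B) (h : a ∉ A' ∨ b ∉ B') :
    H.missingPairs A' B' ⊆ (H.missingPairs A B).erase (a, b) := by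
  rintro ⟨x, y⟩ hxy
  rw [mem_missingPairs] at hxy
  rw [mem_erase, mem_missingPairs, Ne, Prod.mk.injEq]
  refine ⟨?_, hA hxy.1, hB hxy.2.1, hxy.2.2⟩
  rintro ⟨rfl, rfl⟩
  tauto

theorem card_erase_missingPairs_le (hA : A' ⊆ A) (hB : B' ⊆ B) (q : α × β) :
    #((H.missingPairs A' B').erase q) ≤ #(H.missingPairs A B) :=
  card_le_card ((erase_subset _ _).trans (missingPairs_mono hA hB))

def IsInsertable (H : SimpleGraph (α ⊕ β)) (A : Finset α) (B : Finset β) (x : α) (y : β) :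
    Prop :=
  H.Adj (.inl x) (.inr y) ∧
    ((∃ u ∈ A, H.Adj (.inl u) (.inr y)) ∧ (∀ v ∈ B, H.Adj (.inl x) (.inr v)) ∨
      (∃ v ∈ B, H.Adj (.inl x) (.inr v)) ∧ ∀ u ∈ A, H.Adj (.inl u) (.inr y))

theorem Walk.IsPath.exists_insert (hH : H ≤ completeBipartiteGraph α β)
    {P : H.Walk (.inl a) (.inr b)} (hP : P.IsPath) (hPs : P.support.toFinset = A.disjSum B)
    (hx : x ∉ A) (hy : y ∉ B) (hxy : H.IsInsertable A B x y) :
    ∃ Q : H.Walk (.inl a) (.inr b), Q.IsPath ∧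
      Q.support.toFinset = (insert x A).disjSum (insert y B) := by
  obtain ⟨hxy, hins⟩ := hxy
  have hnil : ¬P.Nil := Walk.not_nil_of_ne Sum.inl_ne_inr
  have hmem (z : α ⊕ β) : z ∈ P.support ↔ z ∈ A.disjSum B := by rw [← List.mem_toFinset, hPs]
  obtain ⟨u, v, he, huy, hxv⟩ : ∃ u v, s(.inl u, .inr v) ∈ P.edges ∧
      H.Adj (.inl u) (.inr y) ∧ H.Adj (.inl x) (.inr v) := by
    rcases hins with ⟨⟨u, hu, huy⟩, hxB⟩ | ⟨⟨v, hv, hxv⟩, hyA⟩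
    · obtain ⟨v, he⟩ := Walk.exists_mem_edges_of_inl_mem_support hH hnil
        ((hmem _).2 (inl_mem_disjSum.2 hu))
      exact ⟨u, v, he, huy,
        hxB v (inr_mem_disjSum.1 ((hmem _).1 (P.snd_mem_support_of_mem_edges he)))⟩
    · obtain ⟨u, he⟩ := Walk.exists_mem_edges_of_inr_mem_support hH hnil
        ((hmem _).2 (inr_mem_disjSum.2 hv))
      exact ⟨u, v, he,
        hyA u (inl_mem_disjSum.1 ((hmem _).1 (P.fst_mem_support_of_mem_edges he))), hxv⟩
  obtain ⟨Q, hQ, hQs⟩ := hP.exists_splice he huy hxy.symm hxv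
    (by rw [hmem]; simpa using hy) (by rw [hmem]; simpa using hx)
  refine ⟨Q, hQ, ?_⟩
  rw [hQs, hPs]
  ext (z | z) <;> simp

theorem card_erase_missingPairs_erase_lt {p q : α × β} (hq : q ∈ (H.missingPairs A B).erase p)
    (h : q.1 = x ∨ q.2 = y) :
    #((H.missingPairs (A.erase x) (B.erase y)).erase p) < #((H.missingPairs A B).erase p) := by
  refine card_lt_card ⟨erase_subset_erase _ (missingPairs_mono (erase_subset _ _)
    (erase_subset _ _)), fun h' => ?_⟩
  obtain ⟨x₀, y₀⟩ := q
  have := h' hq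
  simp only [mem_erase, mem_missingPairs] at this
  tauto

theorem exists_removable_pair {n : ℕ} (hn : 2 ≤ n) (hA : #A = n + 1) (hB : #B = n + 1)
    (ha : a ∈ A) (hb : b ∈ B) (hM : #((H.missingPairs A B).erase (a, b)) + 2 ≤ n + 1) :
    ∃ x ∈ A.erase a, ∃ y ∈ B.erase b, H.IsInsertable (A.erase x) (B.erase y) x y ∧
      #((H.missingPairs (A.erase x) (B.erase y)).erase (a, b)) + 2 ≤ n := by
  have hAa : #(A.erase a) = n := by rw [card_erase_of_mem ha, hA]; rfl
  have hBb : #(B.erase b) = n := by rw [card_erase_of_mem hb, hB]; rfl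
  obtain ⟨x₁, hx₁, hx₁B⟩ := exists_forall_adj_inl (H := H) (A := A.erase a) (B := B)
    ((card_le_card (missingPairs_subset_erase (a := a) (b := b) (erase_subset _ _) subset_rfl
      (Or.inl (notMem_erase a A)))).trans_lt (by omega))
  obtain ⟨y₁, hy₁, hy₁A⟩ := exists_forall_adj_inr (H := H) (A := A) (B := B.erase b)
    ((card_le_card (missingPairs_subset_erase (a := a) (b := b) subset_rfl (erase_subset _ _)
      (Or.inr (notMem_erase b B)))).trans_lt (by omega))
  by_cases hsmall : #((H.missingPairs A B).erase (a, b)) + 2 ≤ n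
  · have := card_le_card <| erase_subset_erase (a, b) <|
      missingPairs_mono (H := H) (erase_subset x₁ A) (erase_subset y₁ B)
    exact ⟨x₁, hx₁, y₁, hy₁, ⟨hx₁B y₁ (mem_of_mem_erase hy₁),
      .inl ⟨⟨a, mem_erase.2 ⟨(ne_of_mem_erase hx₁).symm, ha⟩, hy₁A a ha⟩,
        fun v hv => hx₁B v (mem_of_mem_erase hv)⟩⟩, by omega⟩
  obtain ⟨⟨x₀, y₀⟩, hq⟩ : ((H.missingPairs A B).erase (a, b)).Nonempty := card_pos.1 (by omega)
  obtain ⟨hq', hx₀, hy₀, -⟩ := (mem_erase.trans (and_congr_right' mem_missingPairs)).1 hq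
  rcases not_and_or.1 (mt Prod.ext_iff.2 hq') with hx₀a | hy₀b
  · obtain ⟨v, hv, hx₀v⟩ := exists_forall_adj_inr (H := H) (A := {x₀}) (B := B.erase y₁)
      ((card_le_card (missingPairs_subset_erase (a := a) (b := b) (singleton_subset_iff.2 hx₀)
        (erase_subset _ _) (Or.inl (by simpa using Ne.symm hx₀a)))).trans_lt
        (by rw [card_erase_of_mem (mem_of_mem_erase hy₁)]; omega))
    have := card_erase_missingPairs_erase_lt (x := x₀) (y := y₁) hq (.inl rfl)
    exact ⟨x₀, mem_erase.2 ⟨hx₀a, hx₀⟩, y₁, hy₁, ⟨hy₁A x₀ hx₀,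
      .inr ⟨⟨v, hv, hx₀v x₀ (mem_singleton_self _)⟩, fun u hu => hy₁A u (mem_of_mem_erase hu)⟩⟩,
      by omega⟩
  · obtain ⟨u, hu, huy₀⟩ := exists_forall_adj_inl (H := H) (A := A.erase x₁) (B := {y₀})
      ((card_le_card (missingPairs_subset_erase (a := a) (b := b) (erase_subset _ _)
        (singleton_subset_iff.2 hy₀) (Or.inr (by simpa using Ne.symm hy₀b)))).trans_lt
        (by rw [card_erase_of_mem (mem_of_mem_erase hx₁)]; omega))
    have := card_erase_missingPairs_erase_lt (x := x₁) (y := y₀) hq (.inr rfl)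
    exact ⟨x₁, hx₁, y₀, mem_erase.2 ⟨hy₀b, hy₀⟩, ⟨hx₁B y₀ hy₀,
      .inl ⟨⟨u, hu, huy₀ y₀ (mem_singleton_self _)⟩, fun v hv => hx₁B v (mem_of_mem_erase hv)⟩⟩,
      by omega⟩

theorem exists_isPath_support_eq_disjSum_of_card_eq_two (hA : #A = 2) (hB : #B = 2)
    (ha : a ∈ A) (hb : b ∈ B) (hM : #((H.missingPairs A B).erase (a, b)) + 2 ≤ #A) :
    ∃ p : H.Walk (.inl a) (.inr b), p.IsPath ∧ p.support.toFinset = A.disjSum B := by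
  obtain ⟨a', ha', ha'a⟩ := exists_mem_ne (by omega : 1 < #A) a
  obtain ⟨b', hb', hb'b⟩ := exists_mem_ne (by omega : 1 < #B) b
  have hadj {x y} (hx : x ∈ A) (hy : y ∈ B) (hxy : x ≠ a ∨ y ≠ b) : H.Adj (.inl x) (.inr y) := by
    refine adj_of_notMem_missingPairs hx hy fun h => ?_
    have : (x, y) ∈ (H.missingPairs A B).erase (a, b) := mem_erase.2 ⟨by grind, h⟩
    have := card_pos.2 ⟨_, this⟩
    omega
  have hA' : A = {a', a} :=
    (eq_of_subset_of_card_le (by simp [insert_subset_iff, ha, ha']) (by simp [ha'a, hA])).symm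
  have hB' : B = {b', b} :=
    (eq_of_subset_of_card_le (by simp [insert_subset_iff, hb, hb']) (by simp [hb'b, hB])).symm
  refine ⟨.cons (hadj ha hb' (.inr hb'b)) <| .cons (hadj ha' hb' (.inl ha'a)).symm <|
    .cons (hadj ha' hb (.inl ha'a)) .nil, ?_, ?_⟩
  · simp [Walk.cons_isPath_iff, ha'a.symm, hb'b]
  · ext (z | z) <;> simp [hA', hB', or_comm]

theorem exists_isPath_support_eq_disjSum (hH : H ≤ completeBipartiteGraph α β) (hAB : #A = #B)
    (ha : a ∈ A) (hb : b ∈ B) (hM : #((H.missingPairs A B).erase (a, b)) + 2 ≤ #A) :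
    ∃ p : H.Walk (.inl a) (.inr b), p.IsPath ∧ p.support.toFinset = A.disjSum B := by
  obtain ⟨n, hn⟩ : ∃ n, #A = n := ⟨_, rfl⟩
  induction n generalizing A B a b with
  | zero => omega
  | succ n ih =>
    obtain rfl | hn2 : n = 1 ∨ 2 ≤ n := by omega
    · exact exists_isPath_support_eq_disjSum_of_card_eq_two hn (hAB ▸ hn) ha hb hM
    obtain ⟨x, hx, y, hy, hins, hM'⟩ :=
      exists_removable_pair hn2 hn (hAB ▸ hn) ha hb (hn ▸ hM)
    have hxA := mem_of_mem_erase hx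
    have hyB := mem_of_mem_erase hy
    obtain ⟨P, hP, hPs⟩ := ih (by simp [card_erase_of_mem, hxA, hyB, hAB])
      (mem_erase.2 ⟨(ne_of_mem_erase hx).symm, ha⟩) (mem_erase.2 ⟨(ne_of_mem_erase hy).symm, hb⟩)
      (by rwa [card_erase_of_mem hxA, hn]) (by rw [card_erase_of_mem hxA, hn]; rfl)
    obtain ⟨Q, hQ, hQs⟩ := hP.exists_insert hH hPs (notMem_erase x A) (notMem_erase y B) hins
    rw [insert_erase hxA, insert_erase hyB] at hQs
    exact ⟨Q, hQ, hQs⟩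

theorem exists_isPath_length_eq_of_inl_inr (hH : H ≤ completeBipartiteGraph α β)
    (hAB : #B = #A + 1) (hM : #(H.missingPairs A B) + 2 ≤ #A) (ha : a ∈ A) (hb : b ∈ B) :
    ∃ p : H.Walk (.inl a) (.inr b), p.IsPath ∧ p.length = 2 * #A - 1 := by
  obtain ⟨b₀, hb₀, hb₀b⟩ := exists_mem_ne (by omega : 1 < #B) b
  obtain ⟨p, hp, hps⟩ := exists_isPath_support_eq_disjSum hH (B := B.erase b₀)
    (by rw [card_erase_of_mem hb₀]; omega) ha (mem_erase.2 ⟨hb₀b.symm, hb⟩)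
    ((Nat.add_le_add_right (card_erase_missingPairs_le subset_rfl (erase_subset _ _) _) 2).trans hM)
  refine ⟨p, hp, ?_⟩
  have := hp.length_add_one
  rw [hps, card_disjSum, card_erase_of_mem hb₀] at this
  omega

theorem exists_isPath_length_eq_of_inr_inr (hH : H ≤ completeBipartiteGraph α β)
    (hAB : #B = #A + 1) (hM : #(H.missingPairs A B) + 2 ≤ #A) {b₁ b₂ : β} (hb₁ : b₁ ∈ B)
    (hb₂ : b₂ ∈ B) (hne : b₁ ≠ b₂) :
    ∃ p : H.Walk (.inr b₁) (.inr b₂), p.IsPath ∧ p.length = 2 * #A := by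
  obtain ⟨a, ha, hab₁⟩ := exists_forall_adj_inl (H := H) (A := A) (B := {b₁})
    ((card_le_card (missingPairs_mono subset_rfl (singleton_subset_iff.2 hb₁))).trans_lt
      (by omega))
  obtain ⟨p, hp, hps⟩ := exists_isPath_support_eq_disjSum hH (B := B.erase b₁)
    (by rw [card_erase_of_mem hb₁]; omega) ha (mem_erase.2 ⟨hne.symm, hb₂⟩)
    ((Nat.add_le_add_right (card_erase_missingPairs_le subset_rfl (erase_subset _ _) _) 2).trans hM)
  have hb₁p : .inr b₁ ∉ p.support := by rw [← List.mem_toFinset, hps]; simp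
  refine ⟨.cons (hab₁ b₁ (mem_singleton_self _)).symm p, hp.cons hb₁p, ?_⟩
  have := hp.length_add_one
  rw [hps, card_disjSum, card_erase_of_mem hb₁] at this
  rw [Walk.length_cons]
  omega

theorem exists_isPath_length_eq_of_inl_inl (hH : H ≤ completeBipartiteGraph α β)
    (hAB : #B = #A + 1) (hM : #(H.missingPairs A B) + 2 ≤ #A) {a₁ a₂ : α} (ha₁ : a₁ ∈ A)
    (ha₂ : a₂ ∈ A) (hne : a₁ ≠ a₂) :
    ∃ p : H.Walk (.inl a₁) (.inl a₂), p.IsPath ∧ p.length = 2 * #A - 2 := by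
  rcases (by omega : #A = 2 ∨ 3 ≤ #A) with hA | hA
  · have hadj {x y} (hx : x ∈ A) (hy : y ∈ B) : H.Adj (.inl x) (.inr y) :=
      adj_of_notMem_missingPairs hx hy fun h => by have := card_pos.2 ⟨_, h⟩; omega
    obtain ⟨y, hy⟩ := card_pos.1 (by omega : 0 < #B)
    exact ⟨.cons (hadj ha₁ hy) (.cons (hadj ha₂ hy).symm .nil),
      by simp [Walk.cons_isPath_iff, hne], by simp [hA]⟩
  obtain ⟨y₀, hy₀, hy₀M⟩ := exists_card_missingPairs_erase_le (H := H) (A := A)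
    (card_pos.1 (by omega : 0 < #B))
  have hBy₀ : #(B.erase y₀) = #A := by rw [card_erase_of_mem hy₀]; omega
  obtain ⟨y, hy, hya₂⟩ := exists_forall_adj_inr (H := H) (A := {a₂}) (B := B.erase y₀)
    ((card_le_card (missingPairs_mono (singleton_subset_iff.2 ha₂) subset_rfl)).trans_lt
      (by omega))
  obtain ⟨z, hz, hzy⟩ := exists_mem_ne (by omega : 1 < #(B.erase y₀)) y
  obtain ⟨p, hp, hps⟩ := exists_isPath_support_eq_disjSum hH (A := A.erase a₂)
    (B := (B.erase y₀).erase z) (by rw [card_erase_of_mem ha₂, card_erase_of_mem hz, hBy₀])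
    (mem_erase.2 ⟨hne, ha₁⟩) (mem_erase.2 ⟨hzy.symm, hy⟩)
    ((Nat.add_le_add_right (card_erase_missingPairs_le (erase_subset _ _) (erase_subset _ _) _)
      2).trans (by rw [card_erase_of_mem ha₂]; omega))
  have ha₂p : .inl a₂ ∉ p.support := by rw [← List.mem_toFinset, hps]; simp
  refine ⟨p.concat (hya₂ a₂ (mem_singleton_self _)).symm, hp.concat ha₂p _, ?_⟩
  have := hp.length_add_one
  rw [hps, card_disjSum, card_erase_of_mem ha₂, card_erase_of_mem hz, hBy₀] at this
  rw [Walk.length_concat]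
  omega

end SimpleGraph

/-- Let `t ≥ 2` and let `H` be a subgraph of `K_{t,t+1}` (with parts
`A = Fin t` and `B = Fin (t+1)`) obtained by deleting at most `t - 2` edges,
i.e. having at least `t(t+1) - (t-2)` edges.  Then any two distinct vertices of
`B` are joined in `H` by a path of length `2t`, any vertex of `A` and any vertex
of `B` are joined by a path of length `2t - 1`, and any two distinct vertices of
`A` are joined by a path of length `2t - 2`. -/
theorem stmt_17 (t : ℕ) (ht : 2 ≤ t) (H : SimpleGraph (Fin t ⊕ Fin (t + 1)))
    (hH : H ≤ completeBipartiteGraph (Fin t) (Fin (t + 1)))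
    (he : t * (t + 1) - (t - 2) ≤ H.edgeSet.ncard) :
    (∀ b₁ b₂ : Fin (t + 1), b₁ ≠ b₂ →
      ∃ p : H.Walk (Sum.inr b₁) (Sum.inr b₂), p.IsPath ∧ p.length = 2 * t) ∧
    (∀ (a : Fin t) (b : Fin (t + 1)),
      ∃ p : H.Walk (Sum.inl a) (Sum.inr b), p.IsPath ∧ p.length = 2 * t - 1) ∧
    (∀ a₁ a₂ : Fin t, a₁ ≠ a₂ →
      ∃ p : H.Walk (Sum.inl a₁) (Sum.inl a₂), p.IsPath ∧ p.length = 2 * t - 2) := by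
  have hA : #(univ : Finset (Fin t)) = t := card_fin t
  have hAB : #(univ : Finset (Fin (t + 1))) = #(univ : Finset (Fin t)) + 1 := by simp
  have hM : #(H.missingPairs univ univ) + 2 ≤ #(univ : Finset (Fin t)) := by
    have := SimpleGraph.ncard_edgeSet_add_card_missingPairs hH
    simp only [Fintype.card_fin, card_univ] at this ⊢
    omega
  refine ⟨fun b₁ b₂ hb => ?_, fun a b => ?_, fun a₁ a₂ ha => ?_⟩
  · simpa [hA] using SimpleGraph.exists_isPath_length_eq_of_inr_inr hH hAB hM
      (mem_univ b₁) (mem_univ b₂) hb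
  · simpa [hA] using SimpleGraph.exists_isPath_length_eq_of_inl_inr hH hAB hM
      (mem_univ a) (mem_univ b)
  · simpa [hA] using SimpleGraph.exists_isPath_length_eq_of_inl_inl hH hAB hM
      (mem_univ a₁) (mem_univ a₂) ha
end
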